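/- arXiv:2504.16901 — 3 statements merged into one kernel-verified Lean document; each statement's English description precedes it below -/
import Mathlib

section
/- For every natural number n ≥ 0, over the theory DB₀ the schema Coll_s(Σ_{n+1}) is deductively equivalent to the union of the schemas Coll(Σ_{n+1}) and Sep(Σ_{n+1}): every model of DB₀ satisfies all instances of Coll_s(Σ_{n+1}) if and only if it satisfies all instances of Coll(Σ_{n+1}) and all instances of Sep(Σ_{n+1}). -/
/- A deep embedding of the first-order language of set theory L_∈ = {∈, =},
   with named variables indexed by ℕ. -/

namespace FOSet

/-- Formulas of L_∈ with variables indexed by ℕ. -/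
inductive Fml : Type
  | mem : ℕ → ℕ → Fml
  | eq  : ℕ → ℕ → Fml
  | not : Fml → Fml
  | and : Fml → Fml → Fml
  | or  : Fml → Fml → Fml
  | imp : Fml → Fml → Fml
  | all : ℕ → Fml → Fml
  | ex  : ℕ → Fml → Fml

namespace Fml

/-- Free variables of a formula. -/
def fv : Fml → Set ℕ
  | mem i j => {i, j}
  | eq i j  => {i, j}
  | not φ   => φ.fv
  | and φ ψ => φ.fv ∪ ψ.fv
  | or φ ψ  => φ.fv ∪ ψ.fv
  | imp φ ψ => φ.fv ∪ ψ.fv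
  | all i φ => φ.fv \ {i}
  | ex i φ  => φ.fv \ {i}

end Fml

/-- Satisfaction, in the substructure of `(N, E)` with domain `S`, of a formula
under a valuation `v` : quantifiers range over `S`. -/
def SatIn {N : Type} (E : N → N → Prop) (S : Set N) : (ℕ → N) → Fml → Prop
  | v, .mem i j => E (v i) (v j)
  | v, .eq i j  => v i = v j
  | v, .not φ   => ¬ SatIn E S v φ
  | v, .and φ ψ => SatIn E S v φ ∧ SatIn E S v ψ
  | v, .or φ ψ  => SatIn E S v φ ∨ SatIn E S v ψ
  | v, .imp φ ψ => SatIn E S v φ → SatIn E S v ψ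
  | v, .all i φ => ∀ a ∈ S, SatIn E S (Function.update v i a) φ
  | v, .ex i φ  => ∃ a ∈ S, SatIn E S (Function.update v i a) φ

/-- Satisfaction in the full structure `(N, E)`. -/
def Sat {N : Type} (E : N → N → Prop) (v : ℕ → N) (φ : Fml) : Prop :=
  SatIn E Set.univ v φ

/-- Δ₀ (= Σ₀ = Π₀) formulas: every quantifier is bounded, i.e. of the form
`∀ x ∈ y` or `∃ x ∈ y`. -/
inductive IsDelta0 : Fml → Prop
  | mem (i j : ℕ) : IsDelta0 (Fml.mem i j)
  | eq (i j : ℕ)  : IsDelta0 (Fml.eq i j)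
  | not {φ} : IsDelta0 φ → IsDelta0 φ.not
  | and {φ ψ} : IsDelta0 φ → IsDelta0 ψ → IsDelta0 (φ.and ψ)
  | or {φ ψ}  : IsDelta0 φ → IsDelta0 ψ → IsDelta0 (φ.or ψ)
  | imp {φ ψ} : IsDelta0 φ → IsDelta0 ψ → IsDelta0 (φ.imp ψ)
  | ball {i j : ℕ} {φ} : i ≠ j → IsDelta0 φ →
      IsDelta0 (Fml.all i ((Fml.mem i j).imp φ))
  | bex {i j : ℕ} {φ} : i ≠ j → IsDelta0 φ →
      IsDelta0 (Fml.ex i ((Fml.mem i j).and φ))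

/-- The Lévy hierarchy: `(levels n).1` is the class of Σ_n formulas and
`(levels n).2` the class of Π_n formulas. -/
def levels : ℕ → (Fml → Prop) × (Fml → Prop)
  | 0 => (IsDelta0, IsDelta0)
  | n + 1 =>
      (fun φ => ∃ i ψ, (levels n).2 ψ ∧ φ = Fml.ex i ψ,
       fun φ => ∃ i ψ, (levels n).1 ψ ∧ φ = Fml.all i ψ)

def IsSigma (n : ℕ) : Fml → Prop := (levels n).1

def IsPi (n : ℕ) : Fml → Prop := (levels n).2

variable {M N : Type}

/-- `p` is the (Kuratowski) pair `{a, b}` in the sense of `E`. -/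
def IsPairOf (E : M → M → Prop) (p a b : M) : Prop :=
  ∀ w, E w p ↔ (w = a ∨ w = b)

/-- `z` is the ordered pair `(a, b)` (Kuratowski) in the sense of `E`. -/
def IsOPairOf (E : M → M → Prop) (z a b : M) : Prop :=
  ∃ s t, IsPairOf E s a a ∧ IsPairOf E t a b ∧ IsPairOf E z s t

/-- Valuation sending variable 0 to `x` and every other variable to `y`;
used for formulas φ(x, y) with free variables among {0, 1}. -/
def val2 (x y : M) : ℕ → M := fun k => if k = 0 then x else y

/-- Valuation sending 0 ↦ x, 1 ↦ y, everything else ↦ v;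
used for formulas φ(x, y, v) with free variables among {0, 1, 2}. -/
def val3 (x y v : M) : ℕ → M := fun k => if k = 0 then x else if k = 1 then y else v

/-- `M ⊨ Sep(φ)` for φ = φ(x, v) (x is variable 0, v is variable 1):
∀v∀p∃q∀x(x∈q ↔ x∈p ∧ φ(x,v)). -/
def SepAx (E : M → M → Prop) (φ : Fml) : Prop :=
  ∀ v p : M, ∃ q : M, ∀ x : M, E x q ↔ (E x p ∧ Sat E (val2 x v) φ)

/-- `M ⊨ Sep⁻(φ)` for a parameter-free φ = φ(x) (x is variable 0). -/
def SepMinusAx (E : M → M → Prop) (φ : Fml) : Prop :=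
  ∀ p : M, ∃ q : M, ∀ x : M, E x q ↔ (E x p ∧ Sat E (fun _ => x) φ)

/-- `(M, E) ⊨ DB₀`: extensionality, empty set, pairing, union, cartesian
product, and Δ₀ separation. -/
def SatDB0 (E : M → M → Prop) : Prop :=
  (∀ a b : M, (∀ x, E x a ↔ E x b) → a = b) ∧
  (∃ e : M, ∀ x, ¬ E x e) ∧
  (∀ a b : M, ∃ p, IsPairOf E p a b) ∧
  (∀ a : M, ∃ u, ∀ x, E x u ↔ ∃ y, E y a ∧ E x y) ∧
  (∀ a b : M, ∃ c, ∀ z, E z c ↔ ∃ x y, E x a ∧ E y b ∧ IsOPairOf E z x y) ∧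
  (∀ φ, IsDelta0 φ → φ.fv ⊆ {0, 1} → SepAx E φ)

/-- `M ⊨ Coll(φ)` for φ = φ(x, y, v) (x = var 0, y = var 1, v = var 2):
∀v∀p(∀x∈p ∃y φ → ∃q ∀x∈p ∃y∈q φ). -/
def CollAx (E : M → M → Prop) (φ : Fml) : Prop :=
  ∀ v p : M, (∀ x, E x p → ∃ y, Sat E (val3 x y v) φ) →
    ∃ q, ∀ x, E x p → ∃ y, E y q ∧ Sat E (val3 x y v) φ

/-- `M ⊨ Coll_s(φ)`: ∀v∀p∃q∀x∈p(∃y φ ↔ ∃y∈q φ). -/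
def CollSAx (E : M → M → Prop) (φ : Fml) : Prop :=
  ∀ v p : M, ∃ q, ∀ x, E x p →
    ((∃ y, Sat E (val3 x y v) φ) ↔ ∃ y, E y q ∧ Sat E (val3 x y v) φ)

/-- `M ⊨ Coll_w(φ)`: ∀v(∀x∃y φ → ∀p∃q∀x∈p∃y∈q φ). -/
def CollWAx (E : M → M → Prop) (φ : Fml) : Prop :=
  ∀ v : M, (∀ x, ∃ y, Sat E (val3 x y v) φ) →
    ∀ p, ∃ q, ∀ x, E x p → ∃ y, E y q ∧ Sat E (val3 x y v) φ

/-- `M ⊨ Coll⁻(φ)` for a parameter-free φ = φ(x, y) (x = var 0, y = var 1). -/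
def CollMinusAx (E : M → M → Prop) (φ : Fml) : Prop :=
  ∀ p : M, (∀ x, E x p → ∃ y, Sat E (val2 x y) φ) →
    ∃ q, ∀ x, E x p → ∃ y, E y q ∧ Sat E (val2 x y) φ

/-- `M ⊨ Coll_w⁻(φ)` for a parameter-free φ = φ(x, y). -/
def CollWMinusAx (E : M → M → Prop) (φ : Fml) : Prop :=
  (∀ x : M, ∃ y, Sat E (val2 x y) φ) →
    ∀ p, ∃ q, ∀ x, E x p → ∃ y, E y q ∧ Sat E (val2 x y) φ

/-- `M ⊨ Coll_s⁻(φ)` for a parameter-free φ = φ(x, y). -/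
def CollSMinusAx (E : M → M → Prop) (φ : Fml) : Prop :=
  ∀ p : M, ∃ q, ∀ x, E x p →
    ((∃ y, Sat E (val2 x y) φ) ↔ ∃ y, E y q ∧ Sat E (val2 x y) φ)

/- Schemas over a class Γ of formulas. -/

def CollScheme (E : M → M → Prop) (Γ : Fml → Prop) : Prop :=
  ∀ φ, Γ φ → φ.fv ⊆ {0, 1, 2} → CollAx E φ

def CollSScheme (E : M → M → Prop) (Γ : Fml → Prop) : Prop :=
  ∀ φ, Γ φ → φ.fv ⊆ {0, 1, 2} → CollSAx E φ

def CollWScheme (E : M → M → Prop) (Γ : Fml → Prop) : Prop :=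
  ∀ φ, Γ φ → φ.fv ⊆ {0, 1, 2} → CollWAx E φ

def CollMinusScheme (E : M → M → Prop) (Γ : Fml → Prop) : Prop :=
  ∀ φ, Γ φ → φ.fv ⊆ {0, 1} → CollMinusAx E φ

def CollWMinusScheme (E : M → M → Prop) (Γ : Fml → Prop) : Prop :=
  ∀ φ, Γ φ → φ.fv ⊆ {0, 1} → CollWMinusAx E φ

def CollSMinusScheme (E : M → M → Prop) (Γ : Fml → Prop) : Prop :=
  ∀ φ, Γ φ → φ.fv ⊆ {0, 1} → CollSMinusAx E φ

def SepScheme (E : M → M → Prop) (Γ : Fml → Prop) : Prop :=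
  ∀ φ, Γ φ → φ.fv ⊆ {0, 1} → SepAx E φ

def SepMinusScheme (E : M → M → Prop) (Γ : Fml → Prop) : Prop :=
  ∀ φ, Γ φ → φ.fv ⊆ {0} → SepMinusAx E φ

/- Extensions. We present an extension `M ⊆ N` by an embedding `f : M → N`. -/

/-- `f` embeds `(M, EM)` as a substructure of `(N, EN)`. -/
def SubStr (EM : M → M → Prop) (EN : N → N → Prop) (f : M → N) : Prop :=
  Function.Injective f ∧ ∀ a b : M, EM a b ↔ EN (f a) (f b)

/-- `f : M → N` is a (fully) elementary embedding. -/
def ElemEmb (EM : M → M → Prop) (EN : N → N → Prop) (f : M → N) : Prop :=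
  ∀ (φ : Fml) (v : ℕ → M), Sat EM v φ ↔ Sat EN (f ∘ v) φ

/-- `f : M → N` is a Σ_n-elementary embedding (M ≺_{Σ_n} N). -/
def SigmaElemEmb (n : ℕ) (EM : M → M → Prop) (EN : N → N → Prop) (f : M → N) : Prop :=
  ∀ φ, IsSigma n φ → ∀ v : ℕ → M, Sat EM v φ ↔ Sat EN (f ∘ v) φ

/-- `f : M → N` is a Δ₀-elementary embedding (M ≺_{Δ₀} N). -/
def Delta0ElemEmb (EM : M → M → Prop) (EN : N → N → Prop) (f : M → N) : Prop :=
  ∀ φ, IsDelta0 φ → ∀ v : ℕ → M, Sat EM v φ ↔ Sat EN (f ∘ v) φ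

/-- The convex hull M* of (the image of) M in N:
{a ∈ N : N ⊨ a ∈ m for some m ∈ M}. -/
def hull (EN : N → N → Prop) (f : M → N) : Set N := {a | ∃ m : M, EN a (f m)}

/-- The substructure of `N` with domain `S` is a Σ_n-elementary substructure of
`N` (S ≺_{Σ_n} N). -/
def SigmaElemInTop (n : ℕ) (EN : N → N → Prop) (S : Set N) : Prop :=
  ∀ φ, IsSigma n φ → ∀ v : ℕ → N, (∀ k, v k ∈ S) → (SatIn EN S v φ ↔ Sat EN v φ)

/-- The substructure of `N` with domain `S` is a fully elementary substructure. -/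
def ElemInTop (EN : N → N → Prop) (S : Set N) : Prop :=
  ∀ (φ : Fml) (v : ℕ → N), (∀ k, v k ∈ S) → (SatIn EN S v φ ↔ Sat EN v φ)

/-- `f` is a Σ_n-elementary embedding of `M` into the substructure of `N` with
domain `S` (e.g. M ≺_{Σ_n} M*). -/
def SigmaElemEmbInto (n : ℕ) (EM : M → M → Prop) (EN : N → N → Prop) (f : M → N)
    (S : Set N) : Prop :=
  ∀ φ, IsSigma n φ → ∀ v : ℕ → M, Sat EM v φ ↔ SatIn EN S (f ∘ v) φ

/-- `f` is a fully elementary embedding of `M` into the substructure of `N`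
with domain `S`. -/
def ElemEmbInto (EM : M → M → Prop) (EN : N → N → Prop) (f : M → N) (S : Set N) : Prop :=
  ∀ (φ : Fml) (v : ℕ → M), Sat EM v φ ↔ SatIn EN S (f ∘ v) φ

/-- The extension presented by `f` is an end extension. -/
def IsEndEmb (EN : N → N → Prop) (f : M → N) : Prop :=
  ∀ (m : M) (a : N), EN a (f m) → ∃ m', f m' = a

/-- The extension presented by `f` is cofinal. -/
def Cofinal (EN : N → N → Prop) (f : M → N) : Prop :=
  ∀ a : N, ∃ m : M, EN a (f m)

/-- `a` is a transitive set in the sense of `(N, EN)`. -/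
def TransIn (EN : N → N → Prop) (a : N) : Prop :=
  ∀ x, EN x a → ∀ y, EN y x → EN y a

/-- The extension presented by `f` is taller. -/
def Taller (EN : N → N → Prop) (f : M → N) : Prop :=
  ∃ a : N, ∀ m : M, EN (f m) a

/-- The extension presented by `f` is taller*. -/
def TallerStar (EN : N → N → Prop) (f : M → N) : Prop :=
  ∃ a : N, (∀ m : M, EN (f m) a) ∧ TransIn EN a

/-- Property end_n: for every elementary extension N of M, M* ≺_{Σ_n} N. -/
def HasEnd (n : ℕ) (EM : M → M → Prop) : Prop :=
  ∀ (N : Type) (EN : N → N → Prop) (f : M → N), ElemEmb EM EN f →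
    SigmaElemInTop n EN (hull EN f)

/-- Property cof_n: for every elementary extension N of M, M ≺_{Σ_n} M*. -/
def HasCof (n : ℕ) (EM : M → M → Prop) : Prop :=
  ∀ (N : Type) (EN : N → N → Prop) (f : M → N), ElemEmb EM EN f →
    SigmaElemEmbInto n EM EN f (hull EN f)

/-- Property COF_n: for every Δ₀-elementary cofinal extension N of M with
N ⊨ DB₀, M ≺_{Σ_n} N. -/
def HasCOF (n : ℕ) (EM : M → M → Prop) : Prop :=
  ∀ (N : Type) (EN : N → N → Prop) (f : M → N), SatDB0 EN →
    Delta0ElemEmb EM EN f → Cofinal EN f → SigmaElemEmb n EM EN f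

/-- TCo: every set is an element of some transitive set. -/
def SatTCo (E : M → M → Prop) : Prop :=
  ∀ a : M, ∃ t, E a t ∧ TransIn E t

/-- `a` is an ordinal in the sense of `(M, E)`: a transitive set linearly
ordered by `E`. -/
def OrdIn (E : M → M → Prop) (a : M) : Prop :=
  TransIn E a ∧ ∀ x y, E x a → E y a → (E x y ∨ x = y ∨ E y x)

/-- The formula φ(p, α, v) (p = var 0, α = var 1, v = var 2), with parameter
`v ∈ M`, defines a resolution on `(M, E)`. -/
def IsResolution (E : M → M → Prop) (φ : Fml) (v : M) : Prop :=
  φ.fv ⊆ {0, 1, 2} ∧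
  (∀ α, OrdIn E α → ∃! p, Sat E (val3 p α v) φ) ∧
  (∀ α β p q, E α β → Sat E (val3 p α v) φ → Sat E (val3 q β v) φ →
    ∀ x, E x p → E x q) ∧
  (∀ x, ∃ α, OrdIn E α ∧ ∀ p, Sat E (val3 p α v) φ → E x p)

end FOSet

/-!
`Coll_s(Σ_{n+1})` gives `Coll(Σ_{n+1})` at once, and `Sep(Σ_{n+1})` by induction on `n`: for
`φ = ∃ y ψ` with `ψ ∈ Π_n`, strong collection bounds the witnesses by a set `q`, so that
`{x ∈ p : φ} = {x ∈ p : ∃ y ∈ q, ψ}` is an instance of `Π_n`-separation, which is the complement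
of an instance of `Σ_n`-separation. Conversely, given `Coll` and `Sep` for `Σ_{n+1}` and
`φ(x, y) = ∃ a ψ(x, y, a)`, separate `A = {x ∈ p : ∃ y φ}`, collect codes `⟨y, a⟩` of witnesses
for all `x ∈ A` into a set `q`, and take `⋃⋃ q`.

Both directions need two tools. `Coll(Σ_{n+1})` makes `Σ_m` and `Π_m`, `m ≤ n + 1`, closed under
bounded quantifiers up to equivalence: `∃ a ∈ d, ∀ w, σ` holds iff `∀ b, ∃ a ∈ d, ∀ w ∈ b, σ`.
And the schemes, which allow a single parameter, apply to formulas with any number of parameters,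
since these can be packed into one by nested Kuratowski pairs.
-/

namespace FOSet

open Function

namespace Fml

@[simp] lemma fv_mem (i j : ℕ) : (Fml.mem i j).fv = {i, j} := rfl
@[simp] lemma fv_eq (i j : ℕ) : (Fml.eq i j).fv = {i, j} := rfl
@[simp] lemma fv_not (φ : Fml) : φ.not.fv = φ.fv := rfl
@[simp] lemma fv_and (φ ψ : Fml) : (φ.and ψ).fv = φ.fv ∪ ψ.fv := rfl
@[simp] lemma fv_or (φ ψ : Fml) : (φ.or ψ).fv = φ.fv ∪ ψ.fv := rfl
@[simp] lemma fv_imp (φ ψ : Fml) : (φ.imp ψ).fv = φ.fv ∪ ψ.fv := rfl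
@[simp] lemma fv_all (i : ℕ) (φ : Fml) : (Fml.all i φ).fv = φ.fv \ {i} := rfl
@[simp] lemma fv_ex (i : ℕ) (φ : Fml) : (Fml.ex i φ).fv = φ.fv \ {i} := rfl

lemma fv_finite : ∀ φ : Fml, φ.fv.Finite
  | .mem i j | .eq i j => (Set.finite_singleton j).insert i
  | .not φ => fv_finite φ
  | .and φ ψ | .or φ ψ | .imp φ ψ => (fv_finite φ).union (fv_finite ψ)
  | .all _ φ | .ex _ φ => (fv_finite φ).sdiff

lemma exists_fresh (φ : Fml) (A : Finset ℕ) : ∃ k, k ∉ φ.fv ∧ k ∉ A := by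
  obtain ⟨k, hk⟩ := Infinite.exists_notMem_finset ((fv_finite φ).toFinset ∪ A)
  simp only [Finset.mem_union, Set.Finite.mem_toFinset, not_or] at hk
  exact ⟨k, hk⟩

def rename (r : ℕ → ℕ) : Fml → Fml
  | .mem i j => .mem (r i) (r j)
  | .eq i j => .eq (r i) (r j)
  | .not φ => .not (φ.rename r)
  | .and φ ψ => .and (φ.rename r) (ψ.rename r)
  | .or φ ψ => .or (φ.rename r) (ψ.rename r)
  | .imp φ ψ => .imp (φ.rename r) (ψ.rename r)
  | .all i φ => .all (r i) (φ.rename r)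
  | .ex i φ => .ex (r i) (φ.rename r)

lemma fv_rename {r : ℕ → ℕ} (hr : Injective r) (φ : Fml) : (φ.rename r).fv = r '' φ.fv := by
  induction φ with
  | mem | eq => simp [rename, Set.image_insert_eq]
  | not φ ih => simpa [rename] using ih
  | and φ ψ ih₁ ih₂ | or φ ψ ih₁ ih₂ | imp φ ψ ih₁ ih₂ => simp [rename, ih₁, ih₂, Set.image_union]
  | all i φ ih | ex i φ ih => simp [rename, ih, Set.image_sdiff hr]

lemma fv_rename_swap_subset {i i' : ℕ} {φ : Fml} (h : i' ∉ φ.fv) :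
    (φ.rename (Equiv.swap i i')).fv ⊆ (φ.fv \ {i}) ∪ {i'} := by
  rw [fv_rename (Equiv.swap i i').injective]
  rintro _ ⟨k, hk, rfl⟩
  rcases eq_or_ne k i with rfl | hki
  · simp
  · have hki' : k ≠ i' := hk.ne_of_notMem h
    rw [Equiv.swap_apply_of_ne_of_ne hki hki']
    exact Or.inl ⟨hk, hki⟩

end Fml

lemma IsDelta0.rename {r : ℕ → ℕ} (hr : Injective r) {φ : Fml} (h : IsDelta0 φ) :
    IsDelta0 (φ.rename r) := by
  induction h with
  | mem | eq => constructor
  | not _ ih => exact .not ih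
  | and _ _ ih₁ ih₂ => exact .and ih₁ ih₂
  | or _ _ ih₁ ih₂ => exact .or ih₁ ih₂
  | imp _ _ ih₁ ih₂ => exact .imp ih₁ ih₂
  | ball hij _ ih => exact .ball (hr.ne hij) ih
  | bex hij _ ih => exact .bex (hr.ne hij) ih

lemma isSigma_rename_and_isPi_rename {r : ℕ → ℕ} (hr : Injective r) (n : ℕ) :
    (∀ φ, IsSigma n φ → IsSigma n (φ.rename r)) ∧ (∀ φ, IsPi n φ → IsPi n (φ.rename r)) := by
  induction n with
  | zero => exact ⟨fun _ h => IsDelta0.rename hr h, fun _ h => IsDelta0.rename hr h⟩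
  | succ n ih =>
    exact ⟨fun _ ⟨i, ψ, hψ, e⟩ => ⟨r i, _, ih.2 ψ hψ, e ▸ rfl⟩,
      fun _ ⟨i, ψ, hψ, e⟩ => ⟨r i, _, ih.1 ψ hψ, e ▸ rfl⟩⟩

lemma IsSigma.rename {r : ℕ → ℕ} (hr : Injective r) {n : ℕ} {φ : Fml} (h : IsSigma n φ) :
    IsSigma n (φ.rename r) :=
  (isSigma_rename_and_isPi_rename hr n).1 φ h

lemma IsPi.rename {r : ℕ → ℕ} (hr : Injective r) {n : ℕ} {φ : Fml} (h : IsPi n φ) :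
    IsPi n (φ.rename r) :=
  (isSigma_rename_and_isPi_rename hr n).2 φ h

section Semantics

variable {M : Type} {E : M → M → Prop}

@[simp] lemma sat_mem (v : ℕ → M) (i j : ℕ) : Sat E v (.mem i j) ↔ E (v i) (v j) := Iff.rfl
@[simp] lemma sat_eq (v : ℕ → M) (i j : ℕ) : Sat E v (.eq i j) ↔ v i = v j := Iff.rfl
@[simp] lemma sat_not (v : ℕ → M) (φ : Fml) : Sat E v φ.not ↔ ¬ Sat E v φ := Iff.rfl
@[simp] lemma sat_and (v : ℕ → M) (φ ψ : Fml) : Sat E v (φ.and ψ) ↔ Sat E v φ ∧ Sat E v ψ :=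
  Iff.rfl
@[simp] lemma sat_or (v : ℕ → M) (φ ψ : Fml) : Sat E v (φ.or ψ) ↔ Sat E v φ ∨ Sat E v ψ :=
  Iff.rfl
@[simp] lemma sat_imp (v : ℕ → M) (φ ψ : Fml) :
    Sat E v (φ.imp ψ) ↔ (Sat E v φ → Sat E v ψ) := Iff.rfl
@[simp] lemma sat_all (v : ℕ → M) (i : ℕ) (φ : Fml) :
    Sat E v (.all i φ) ↔ ∀ a, Sat E (update v i a) φ := by
  simp [Sat, SatIn]
@[simp] lemma sat_ex (v : ℕ → M) (i : ℕ) (φ : Fml) :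
    Sat E v (.ex i φ) ↔ ∃ a, Sat E (update v i a) φ := by
  simp [Sat, SatIn]

lemma sat_congr {φ : Fml} {v w : ℕ → M} (h : Set.EqOn v w φ.fv) : Sat E v φ ↔ Sat E w φ := by
  induction φ generalizing v w with
  | mem i j | eq i j => simp [h (by simp : i ∈ _), h (by simp : j ∈ _)]
  | not φ ih => simp [ih h]
  | and φ ψ ih₁ ih₂ | or φ ψ ih₁ ih₂ | imp φ ψ ih₁ ih₂ =>
    simp [ih₁ (h.mono Set.subset_union_left), ih₂ (h.mono Set.subset_union_right)]
  | all i φ ih | ex i φ ih =>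
    have key : ∀ a, Sat E (update v i a) φ ↔ Sat E (update w i a) φ := fun a => ih fun k hk => by
      rcases eq_or_ne k i with rfl | hki
      · simp
      · simp [update_of_ne hki, h ⟨hk, hki⟩]
    simp [key]

lemma sat_update_of_notMem {φ : Fml} {j : ℕ} (h : j ∉ φ.fv) (v : ℕ → M) (a : M) :
    Sat E (update v j a) φ ↔ Sat E v φ :=
  sat_congr fun _ hk => update_of_ne (hk.ne_of_notMem h) _ _

lemma sat_rename {r : ℕ → ℕ} (hr : Injective r) (φ : Fml) (v : ℕ → M) :
    Sat E v (φ.rename r) ↔ Sat E (v ∘ r) φ := by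
  induction φ generalizing v with
  | mem | eq => simp [Fml.rename]
  | not φ ih => simp [Fml.rename, ih]
  | and φ ψ ih₁ ih₂ | or φ ψ ih₁ ih₂ | imp φ ψ ih₁ ih₂ => simp [Fml.rename, ih₁, ih₂]
  | all i φ ih | ex i φ ih => simp [Fml.rename, ih, update_comp_eq_of_injective _ hr]

lemma sat_update_rename_swap {i i' : ℕ} {φ : Fml} (h : i' ∉ φ.fv) (v : ℕ → M) (a : M) :
    Sat E (update v i' a) (φ.rename (Equiv.swap i i')) ↔ Sat E (update v i a) φ := by
  rw [sat_rename (Equiv.swap i i').injective]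
  refine sat_congr fun k hk => ?_
  rcases eq_or_ne k i with rfl | hki
  · simp
  · have hki' : k ≠ i' := hk.ne_of_notMem h
    simp [Equiv.swap_apply_of_ne_of_ne hki hki', update_of_ne hki, update_of_ne hki']

end Semantics

section Definable

variable {M : Type} {E : M → M → Prop}

def Definable (E : M → M → Prop) (C : Fml → Prop) (s : Set ℕ) (P : (ℕ → M) → Prop) : Prop :=
  ∃ φ, C φ ∧ φ.fv ⊆ s ∧ ∀ v, Sat E v φ ↔ P v

namespace Definable

variable {C : Fml → Prop} {s t : Set ℕ} {P Q : (ℕ → M) → Prop}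

lemma of_formula {φ : Fml} (h : C φ) : Definable E C φ.fv (Sat E · φ) :=
  ⟨φ, h, subset_rfl, fun _ => Iff.rfl⟩

lemma congr (h : Definable E C s P) (hPQ : ∀ v, P v ↔ Q v) : Definable E C s Q :=
  let ⟨φ, hφ, hfv, hP⟩ := h
  ⟨φ, hφ, hfv, fun v => (hP v).trans (hPQ v)⟩

lemma mono (h : Definable E C s P) (hst : s ⊆ t) : Definable E C t P :=
  let ⟨φ, hφ, hfv, hP⟩ := h
  ⟨φ, hφ, hfv.trans hst, hP⟩

lemma ex {n : ℕ} (h : Definable E (IsPi n) s P) (i : ℕ) :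
    Definable E (IsSigma (n + 1)) (s \ {i}) (fun v => ∃ a, P (update v i a)) :=
  let ⟨φ, hφ, hfv, hP⟩ := h
  ⟨.ex i φ, ⟨i, φ, hφ, rfl⟩, Set.sdiff_subset_sdiff_left hfv, fun v => by simp [hP]⟩

lemma all {n : ℕ} (h : Definable E (IsSigma n) s P) (i : ℕ) :
    Definable E (IsPi (n + 1)) (s \ {i}) (fun v => ∀ a, P (update v i a)) :=
  let ⟨φ, hφ, hfv, hP⟩ := h
  ⟨.all i φ, ⟨i, φ, hφ, rfl⟩, Set.sdiff_subset_sdiff_left hfv, fun v => by simp [hP]⟩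

end Definable

lemma definable_not (n : ℕ) :
    (∀ {s P}, Definable E (IsSigma n) s P → Definable E (IsPi n) s (¬ P ·)) ∧
    (∀ {s P}, Definable E (IsPi n) s P → Definable E (IsSigma n) s (¬ P ·)) := by
  induction n with
  | zero =>
    exact ⟨fun ⟨φ, hφ, hfv, hP⟩ => ⟨φ.not, .not hφ, hfv, by simp [hP]⟩,
      fun ⟨φ, hφ, hfv, hP⟩ => ⟨φ.not, .not hφ, hfv, by simp [hP]⟩⟩
  | succ n ih =>
    refine ⟨fun ⟨_, ⟨i, ψ, hψ, rfl⟩, hfv, hP⟩ => ?_, fun ⟨_, ⟨i, ψ, hψ, rfl⟩, hfv, hP⟩ => ?_⟩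
    · refine ((ih.2 (.of_formula hψ)).all i).mono hfv |>.congr fun v => ?_
      simp [← hP]
    · refine ((ih.1 (.of_formula hψ)).ex i).mono hfv |>.congr fun v => ?_
      simp [← hP]

lemma Definable.not_sigma {n : ℕ} {s : Set ℕ} {P : (ℕ → M) → Prop}
    (h : Definable E (IsSigma n) s P) : Definable E (IsPi n) s (¬ P ·) :=
  (definable_not n).1 h

lemma Definable.not_pi {n : ℕ} {s : Set ℕ} {P : (ℕ → M) → Prop}
    (h : Definable E (IsPi n) s P) : Definable E (IsSigma n) s (¬ P ·) :=
  (definable_not n).2 h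

section Nonempty

variable [Nonempty M]

lemma sat_ex_of_notMem {φ : Fml} {j : ℕ} (h : j ∉ φ.fv) (v : ℕ → M) :
    Sat E v (.ex j φ) ↔ Sat E v φ := by
  simp [sat_update_of_notMem h]

lemma sat_all_of_notMem {φ : Fml} {j : ℕ} (h : j ∉ φ.fv) (v : ℕ → M) :
    Sat E v (.all j φ) ↔ Sat E v φ := by
  simp [sat_update_of_notMem h]

lemma Definable.sigma_succ_of_pi {n : ℕ} {s : Set ℕ} {P : (ℕ → M) → Prop}
    (h : Definable E (IsPi n) s P) : Definable E (IsSigma (n + 1)) s P := by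
  obtain ⟨φ, hφ, hfv, hP⟩ := h
  obtain ⟨j, hj, -⟩ := φ.exists_fresh ∅
  exact ⟨.ex j φ, ⟨j, φ, hφ, rfl⟩, Set.sdiff_subset.trans hfv,
    fun v => (sat_ex_of_notMem hj v).trans (hP v)⟩

lemma Definable.pi_succ_of_sigma {n : ℕ} {s : Set ℕ} {P : (ℕ → M) → Prop}
    (h : Definable E (IsSigma n) s P) : Definable E (IsPi (n + 1)) s P := by
  obtain ⟨φ, hφ, hfv, hP⟩ := h
  obtain ⟨j, hj, -⟩ := φ.exists_fresh ∅
  exact ⟨.all j φ, ⟨j, φ, hφ, rfl⟩, Set.sdiff_subset.trans hfv,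
    fun v => (sat_all_of_notMem hj v).trans (hP v)⟩

lemma definable_succ (n : ℕ) :
    (∀ {s P}, Definable E (IsSigma n) s P → Definable E (IsSigma (n + 1)) s P) ∧
    (∀ {s P}, Definable E (IsPi n) s P → Definable E (IsPi (n + 1)) s P) := by
  induction n with
  | zero => exact ⟨Definable.sigma_succ_of_pi (n := 0), Definable.pi_succ_of_sigma (n := 0)⟩
  | succ n ih =>
    refine ⟨fun ⟨_, ⟨i, ψ, hψ, rfl⟩, hfv, hP⟩ => ?_, fun ⟨_, ⟨i, ψ, hψ, rfl⟩, hfv, hP⟩ => ?_⟩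
    · refine ((ih.2 (.of_formula hψ)).ex i).mono hfv |>.congr fun v => ?_
      simp [← hP]
    · refine ((ih.1 (.of_formula hψ)).all i).mono hfv |>.congr fun v => ?_
      simp [← hP]

lemma Definable.sigma_of_pi {k n : ℕ} {s : Set ℕ} {P : (ℕ → M) → Prop}
    (h : Definable E (IsPi k) s P) (hkn : k < n) : Definable E (IsSigma n) s P := by
  induction n, hkn using Nat.le_induction with
  | base => exact h.sigma_succ_of_pi
  | succ n _ ih => exact (definable_succ n).1 ih

lemma definable_and_delta0 (n : ℕ) :
    (∀ {φ δ}, IsSigma n φ → IsDelta0 δ →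
      Definable E (IsSigma n) (φ.fv ∪ δ.fv) (fun v => Sat E v φ ∧ Sat E v δ)) ∧
    (∀ {φ δ}, IsPi n φ → IsDelta0 δ →
      Definable E (IsPi n) (φ.fv ∪ δ.fv) (fun v => Sat E v φ ∧ Sat E v δ)) := by
  induction n with
  | zero =>
    exact ⟨fun hφ hδ => ⟨_, .and hφ hδ, subset_rfl, fun _ => Iff.rfl⟩,
      fun hφ hδ => ⟨_, .and hφ hδ, subset_rfl, fun _ => Iff.rfl⟩⟩
  | succ n ih =>
    -- once the bound variable avoids the free variables of `δ`, `δ` moves under the quantifier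
    constructor
    · rintro _ δ ⟨i, ψ, hψ, rfl⟩ hδ
      obtain ⟨i', hi'ψ, hi'δ⟩ := ψ.exists_fresh (Fml.fv_finite δ).toFinset
      rw [Set.Finite.mem_toFinset] at hi'δ
      refine ((ih.2 (IsPi.rename (Equiv.swap i i').injective hψ) hδ).ex i').mono ?_ |>.congr
        fun v => ?_
      · intro x hx
        have := @Fml.fv_rename_swap_subset i i' ψ hi'ψ x
        simp only [Fml.fv_ex, Set.mem_union, Set.mem_sdiff, Set.mem_singleton_iff] at hx this ⊢
        tauto
      · simp [sat_update_of_notMem hi'δ, sat_update_rename_swap hi'ψ]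
    · rintro _ δ ⟨i, ψ, hψ, rfl⟩ hδ
      obtain ⟨i', hi'ψ, hi'δ⟩ := ψ.exists_fresh (Fml.fv_finite δ).toFinset
      rw [Set.Finite.mem_toFinset] at hi'δ
      refine ((ih.1 (IsSigma.rename (Equiv.swap i i').injective hψ) hδ).all i').mono ?_ |>.congr
        fun v => ?_
      · intro x hx
        have := @Fml.fv_rename_swap_subset i i' ψ hi'ψ x
        simp only [Fml.fv_all, Set.mem_union, Set.mem_sdiff, Set.mem_singleton_iff] at hx this ⊢
        tauto
      · simp [sat_update_of_notMem hi'δ, sat_update_rename_swap hi'ψ, forall_and]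

lemma Definable.and_delta0 {n : ℕ} {s t : Set ℕ} {P D : (ℕ → M) → Prop}
    (h : Definable E (IsPi n) s P) (hD : Definable E IsDelta0 t D) :
    Definable E (IsPi n) (s ∪ t) (fun v => P v ∧ D v) := by
  obtain ⟨φ, hφ, hfv, hP⟩ := h
  obtain ⟨δ, hδ, hδfv, hD⟩ := hD
  exact ((definable_and_delta0 n).2 hφ hδ).mono (Set.union_subset_union hfv hδfv) |>.congr
    fun v => and_congr (hP v) (hD v)

end Nonempty

end Definable

section Bounded

variable {M : Type} {E : M → M → Prop}

def BexClosed (E : M → M → Prop) (C : Fml → Prop) : Prop :=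
  ∀ φ, C φ → ∀ c d, c ≠ d →
    Definable E C ((φ.fv \ {c}) ∪ {d}) (fun v => ∃ a, E a (v d) ∧ Sat E (update v c a) φ)

lemma bexClosed_delta0 : BexClosed E IsDelta0 := by
  intro φ hφ c d hcd
  refine ⟨.ex c ((Fml.mem c d).and φ), .bex hcd hφ, ?_, fun v => by simp [update_of_ne hcd.symm]⟩
  rintro k ⟨hk | hk, hkc⟩
  · rcases hk with rfl | rfl
    exacts [absurd rfl hkc, Or.inr rfl]
  · exact Or.inl ⟨hk, hkc⟩

variable {C : Fml → Prop} {s : Set ℕ} {P : (ℕ → M) → Prop}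

lemma BexClosed.definable (hC : BexClosed E C) (h : Definable E C s P) {c d : ℕ} (hcd : c ≠ d) :
    Definable E C ((s \ {c}) ∪ {d}) (fun v => ∃ a, E a (v d) ∧ P (update v c a)) := by
  obtain ⟨φ, hφ, hfv, hP⟩ := h
  exact (hC φ hφ c d hcd).mono (Set.union_subset_union_left _ (Set.sdiff_subset_sdiff_left hfv))
    |>.congr fun v => by simp only [hP]

lemma BexClosed.definable_ball {n : ℕ} (hC : BexClosed E (IsPi n))
    (h : Definable E (IsSigma n) s P) {c d : ℕ} (hcd : c ≠ d) :
    Definable E (IsSigma n) ((s \ {c}) ∪ {d}) (fun v => ∀ a, E a (v d) → P (update v c a)) :=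
  (hC.definable h.not_sigma hcd).not_pi.congr fun v => by simp

lemma Definable.and_of_delta0 {t : Set ℕ} {Q : (ℕ → M) → Prop} (hP : Definable E IsDelta0 s P)
    (hQ : Definable E IsDelta0 t Q) : Definable E IsDelta0 (s ∪ t) (fun v => P v ∧ Q v) := by
  obtain ⟨φ, hφ, hfv, hP⟩ := hP
  obtain ⟨ψ, hψ, hψfv, hQ⟩ := hQ
  exact ⟨φ.and ψ, .and hφ hψ, Set.union_subset_union hfv hψfv, fun v => by simp [hP, hQ]⟩

end Bounded

section Pairs

variable {M : Type} {E : M → M → Prop}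

lemma definable_isPairOf (i j l : ℕ) :
    Definable E IsDelta0 {i, j, l} (fun v => IsPairOf E (v l) (v i) (v j)) := by
  obtain ⟨w, hw⟩ := Infinite.exists_notMem_finset ({i, j, l} : Finset ℕ)
  simp only [Finset.mem_insert, Finset.mem_singleton, not_or] at hw
  obtain ⟨hwi, hwj, hwl⟩ := hw
  refine ⟨(Fml.mem i l).and ((Fml.mem j l).and
    (.all w ((Fml.mem w l).imp ((Fml.eq w i).or (Fml.eq w j))))),
    .and (.mem _ _) (.and (.mem _ _) (.ball hwl (.or (.eq _ _) (.eq _ _)))), ?_, fun v => ?_⟩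
  · intro k hk
    simp only [Fml.fv_and, Fml.fv_all, Fml.fv_imp, Fml.fv_or, Fml.fv_mem, Fml.fv_eq,
      Set.mem_union, Set.mem_sdiff, Set.mem_insert_iff, Set.mem_singleton_iff] at hk ⊢
    tauto
  · simp only [sat_and, sat_mem, sat_all, sat_imp, sat_or, sat_eq, update_self,
      update_of_ne (Ne.symm hwl), update_of_ne (Ne.symm hwi), update_of_ne (Ne.symm hwj)]
    constructor
    · rintro ⟨hi, hj, hall⟩ x
      exact ⟨hall x, by rintro (rfl | rfl) <;> assumption⟩
    · intro h
      exact ⟨(h _).2 (Or.inl rfl), (h _).2 (Or.inr rfl), fun x => (h x).1⟩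

lemma definable_isOPairOf (i j l : ℕ) :
    Definable E IsDelta0 {i, j, l} (fun v => IsOPairOf E (v l) (v i) (v j)) := by
  obtain ⟨s, hs⟩ := Infinite.exists_notMem_finset ({i, j, l} : Finset ℕ)
  obtain ⟨t, ht⟩ := Infinite.exists_notMem_finset ({i, j, l, s} : Finset ℕ)
  simp only [Finset.mem_insert, Finset.mem_singleton, not_or] at hs ht
  obtain ⟨hsi, hsj, hsl⟩ := hs
  obtain ⟨hti, htj, htl, hts⟩ := ht
  have hpairs := (definable_isPairOf (E := E) i i s).and_of_delta0
    ((definable_isPairOf i j t).and_of_delta0 (definable_isPairOf s t l))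
  refine ((bexClosed_delta0.definable (bexClosed_delta0.definable hpairs htl) hsl).mono ?_).congr
    fun v => ?_
  · intro k hk
    simp only [Set.mem_union, Set.mem_sdiff, Set.mem_insert_iff, Set.mem_singleton_iff] at hk ⊢
    tauto
  · simp only [update_apply, Ne.symm hsi, Ne.symm hsj, Ne.symm hsl, Ne.symm hti, Ne.symm htj,
      Ne.symm htl, Ne.symm hts, hts, if_true, if_false, IsOPairOf]
    constructor
    · rintro ⟨a, -, b, -, h⟩
      exact ⟨a, b, h⟩
    · rintro ⟨a, b, h₁, h₂, h₃⟩
      exact ⟨a, (h₃ a).2 (Or.inl rfl), b, (h₃ b).2 (Or.inr rfl), h₁, h₂, h₃⟩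

namespace IsOPairOf

variable {z a b c d : M}

lemma fst_mem_of_mem {w : M} (h : IsOPairOf E z a b) (hw : E w z) : E a w := by
  obtain ⟨s, t, hs, ht, hz⟩ := h
  rcases (hz w).1 hw with rfl | rfl
  exacts [(hs a).2 (Or.inl rfl), (ht a).2 (Or.inl rfl)]

lemma eq_or_eq_of_mem_of_mem {w x : M} (h : IsOPairOf E z a b) (hw : E w z) (hx : E x w) :
    x = a ∨ x = b := by
  obtain ⟨s, t, hs, ht, hz⟩ := h
  rcases (hz w).1 hw with rfl | rfl
  exacts [((hs x).1 hx).elim Or.inl Or.inl, (ht x).1 hx]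

lemma exists_singleton (h : IsOPairOf E z a b) : ∃ w, E w z ∧ ∀ x, E x w → x = a := by
  obtain ⟨s, t, hs, ht, hz⟩ := h
  exact ⟨s, (hz s).2 (Or.inl rfl), fun x hx => ((hs x).1 hx).elim id id⟩

lemma exists_snd_mem (h : IsOPairOf E z a b) : ∃ w, E w z ∧ E b w := by
  obtain ⟨s, t, hs, ht, hz⟩ := h
  exact ⟨t, (hz t).2 (Or.inr rfl), (ht b).2 (Or.inr rfl)⟩

lemma fst_eq (h₁ : IsOPairOf E z a b) (h₂ : IsOPairOf E z c d) : a = c := by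
  obtain ⟨w, hw, hwc⟩ := h₂.exists_singleton
  exact hwc a (h₁.fst_mem_of_mem hw)

lemma inj (h₁ : IsOPairOf E z a b) (h₂ : IsOPairOf E z c d) : a = c ∧ b = d := by
  have hac := h₁.fst_eq h₂
  refine ⟨hac, ?_⟩
  obtain ⟨w, hw, hbw⟩ := h₁.exists_snd_mem
  obtain ⟨w', hw', hdw'⟩ := h₂.exists_snd_mem
  have hb := h₂.eq_or_eq_of_mem_of_mem hw hbw
  have hd := h₁.eq_or_eq_of_mem_of_mem hw' hdw'
  subst hac
  rcases hb with rfl | rfl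
  · rcases hd with rfl | rfl <;> rfl
  · rfl

end IsOPairOf

end Pairs

namespace SatDB0

variable {M : Type} {E : M → M → Prop} (hM : SatDB0 E)
include hM

lemma nonempty : Nonempty M :=
  let ⟨e, _⟩ := hM.2.1
  ⟨e⟩

lemma exists_isOPairOf (a b : M) : ∃ z, IsOPairOf E z a b := by
  obtain ⟨s, hs⟩ := hM.2.2.1 a a
  obtain ⟨t, ht⟩ := hM.2.2.1 a b
  obtain ⟨z, hz⟩ := hM.2.2.1 s t
  exact ⟨z, s, t, hs, ht, hz⟩

lemma exists_sUnion (a : M) : ∃ u, ∀ x, E x u ↔ ∃ y, E y a ∧ E x y :=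
  hM.2.2.2.1 a

lemma sepScheme_delta0 : SepScheme E IsDelta0 :=
  hM.2.2.2.2.2

end SatDB0

section Packing

variable {M : Type} {E : M → M → Prop} {m : ℕ}

lemma BexClosed.definable_exists_isOPairOf [Nonempty M] (hA : BexClosed E (IsPi m))
    {s : Set ℕ} {P : (ℕ → M) → Prop} (h : Definable E (IsPi m) s P) {i j l : ℕ}
    (hij : i ≠ j) (hil : i ≠ l) (hjl : j ≠ l) :
    Definable E (IsPi m) ((s \ {i, j}) ∪ {l})
      (fun v => ∃ a b, IsOPairOf E (v l) a b ∧ P (update (update v i a) j b)) := by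
  obtain ⟨φ, hφ, hfv, hP⟩ := h
  obtain ⟨S, hSφ, hS⟩ := φ.exists_fresh {i, j, l}
  obtain ⟨T, hTφ, hT⟩ := φ.exists_fresh {i, j, l, S}
  simp only [Finset.mem_insert, Finset.mem_singleton, not_or] at hS hT
  obtain ⟨hSi, hSj, hSl⟩ := hS
  obtain ⟨hTi, hTj, hTl, hTS⟩ := hT
  -- `∃ s' ∈ v l, ∃ a ∈ s', ∃ t' ∈ v l, ∃ b ∈ t'` reaches both components of the pair `v l`
  have hD := (Definable.of_formula (E := E) hφ).and_delta0 (definable_isOPairOf i j l)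
  have hF := hA.definable (hA.definable (hA.definable (hA.definable hD (Ne.symm hTj)) hTl)
    (Ne.symm hSi)) hSl
  refine (hF.mono ?_).congr fun v => ?_
  · intro k hk
    have := @hfv k
    simp only [Set.mem_union, Set.mem_sdiff, Set.mem_insert_iff, Set.mem_singleton_iff] at hk ⊢
    tauto
  · have hφ_congr : ∀ s' a t' b, Sat E (update (update (update (update v S s') i a) T t') j b) φ ↔
        P (update (update v i a) j b) := fun s' a t' b => by
      rw [← hP]
      refine sat_congr fun k hk => ?_
      simp [update_apply, hk.ne_of_notMem hSφ, hk.ne_of_notMem hTφ]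
    simp only [hφ_congr, update_apply, Ne.symm hSi, Ne.symm hSj, Ne.symm hSl, Ne.symm hTi,
      Ne.symm hTj, Ne.symm hTl, hTS, hij, Ne.symm hjl, Ne.symm hil, if_true, if_false]
    constructor
    · rintro ⟨s', -, a, -, t', -, b, -, hPab, hpair⟩
      exact ⟨a, b, hpair, hPab⟩
    · rintro ⟨a, b, hpair, hPab⟩
      obtain ⟨s', t', hs', ht', hl⟩ := id hpair
      exact ⟨s', (hl s').2 (Or.inl rfl), a, (hs' a).2 (Or.inl rfl), t', (hl t').2 (Or.inr rfl), b,
        (ht' b).2 (Or.inr rfl), hPab, hpair⟩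

/-- `e` codes the values under `v` of the variables in `K` as nested ordered pairs. -/
lemma BexClosed.exists_pack (hM : SatDB0 E) (hA : BexClosed E (IsPi m)) {φ : Fml}
    (hφ : IsPi m φ) (v : ℕ → M) (K : Finset ℕ) :
    ∀ ℓ ∉ K, ∃ φ' e, IsPi m φ' ∧ φ'.fv ⊆ (φ.fv \ K) ∪ {ℓ} ∧
      ∀ u, u ℓ = e → (Sat E u φ' ↔ Sat E (K.piecewise v u) φ) := by
  have := hM.nonempty
  induction K using Finset.induction_on with
  | empty =>
    intro ℓ _
    exact ⟨φ, Classical.arbitrary M, hφ, fun k hk => Or.inl ⟨hk, by simp⟩, by simp⟩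
  | @insert k K hkK ih =>
    intro ℓ hℓ
    rw [Finset.mem_insert, not_or] at hℓ
    obtain ⟨ℓ₁, hℓ₁φ, hℓ₁⟩ := φ.exists_fresh (insert ℓ (insert k K))
    simp only [Finset.mem_insert, not_or] at hℓ₁
    obtain ⟨hℓ₁ℓ, hℓ₁k, hℓ₁K⟩ := hℓ₁
    obtain ⟨φ₁, e₁, hφ₁, hfv₁, hsat₁⟩ := ih ℓ₁ hℓ₁K
    obtain ⟨e, he⟩ := hM.exists_isOPairOf (v k) e₁
    obtain ⟨φ', hφ', hfv', hsat'⟩ := hA.definable_exists_isOPairOf (.of_formula hφ₁)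
      (Ne.symm hℓ₁k) (Ne.symm hℓ.1) hℓ₁ℓ
    refine ⟨φ', e, hφ', fun x hx => ?_, fun u hu => ?_⟩
    · rcases hfv' hx with ⟨hx₁, hx₂⟩ | hx
      · simp only [Set.mem_insert_iff, Set.mem_singleton_iff, not_or] at hx₂
        rcases hfv₁ hx₁ with ⟨hxφ, hxK⟩ | hx₃
        · exact Or.inl ⟨hxφ, by simp [hx₂.1, hxK]⟩
        · exact absurd hx₃ hx₂.2
      · exact Or.inr hx
    · have hcode : (∃ a b, IsOPairOf E e a b ∧ Sat E (update (update u k a) ℓ₁ b) φ₁) ↔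
          Sat E (update (update u k (v k)) ℓ₁ e₁) φ₁ :=
        ⟨fun ⟨a, b, hab, h⟩ => by obtain ⟨rfl, rfl⟩ := hab.inj he; exact h,
          fun h => ⟨_, _, he, h⟩⟩
      rw [hsat' u]
      dsimp only
      rw [hu, hcode, hsat₁ _ (update_self _ _ _), ← K.update_piecewise_of_notMem v _ hℓ₁K,
        sat_update_of_notMem hℓ₁φ, Finset.piecewise_insert, K.update_piecewise_of_notMem v u hkK]

lemma BexClosed.exists_rename_pack (hM : SatDB0 E) (hA : BexClosed E (IsPi m)) {τ : Fml}
    (hτ : IsPi m τ) (v : ℕ → M) (X : Finset ℕ) {ℓ : ℕ} (hℓτ : ℓ ∉ τ.fv) (hℓX : ℓ ∉ X)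
    {r : ℕ → ℕ} (hr : Injective r) :
    ∃ Φ e, IsPi m Φ ∧ Φ.fv ⊆ r '' insert ℓ ↑X ∧
      ∀ u, u (r ℓ) = e → (Sat E u Φ ↔ Sat E (X.piecewise (u ∘ r) v) τ) := by
  set K := (Fml.fv_finite τ).toFinset \ X
  obtain ⟨φ, e, hφ, hfv, hsat⟩ :=
    hA.exists_pack hM hτ v K ℓ (by simp [K, hℓτ])
  refine ⟨φ.rename r, e, hφ.rename hr, ?_, fun u hu => ?_⟩
  · rw [Fml.fv_rename hr]
    refine Set.image_mono (hfv.trans ?_)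
    rintro k (⟨hkτ, hkK⟩ | rfl)
    · simp_all [K]
    · exact Set.mem_insert _ _
  · rw [sat_rename hr, hsat _ hu]
    refine sat_congr fun k hkτ => ?_
    by_cases hkX : k ∈ X <;> simp [K, hkX, hkτ]

lemma BexClosed.exists_collInstance (hM : SatDB0 E) (hA : BexClosed E (IsPi m)) {τ : Fml}
    (hτ : IsPi m τ) {c j : ℕ} (hcj : c ≠ j) {s₀ s₁ t : ℕ} (h₀₁ : s₀ ≠ s₁) (h₀t : s₀ ≠ t)
    (h₁t : s₁ ≠ t) (v : ℕ → M) :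
    ∃ Φ e, IsPi m Φ ∧ Φ.fv ⊆ {s₀, s₁, t} ∧
      ∀ u, u t = e → (Sat E u Φ ↔ Sat E (update (update v c (u s₀)) j (u s₁)) τ) := by
  obtain ⟨ℓ, hℓτ, hℓ⟩ := τ.exists_fresh {c, j}
  simp only [Finset.mem_insert, Finset.mem_singleton, not_or] at hℓ
  -- send `c, j, ℓ` to the slots `s₀, s₁, t`, and every other variable out of their way
  let r (k : ℕ) : ℕ :=
    if k = c then s₀ else if k = j then s₁ else if k = ℓ then t else k + (s₀ + s₁ + t + 1)
  have hr : Injective r := by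
    intro a b h
    simp only [r] at h
    split_ifs at h <;> omega
  obtain ⟨Φ, e, hΦ, hfv, hsat⟩ := hA.exists_rename_pack hM hτ v {c, j} hℓτ (by simpa using hℓ) hr
  refine ⟨Φ, e, hΦ, hfv.trans ?_, fun u hu => (hsat u (by simpa [r, hℓ] using hu)).trans ?_⟩
  · rintro _ ⟨k, hk, rfl⟩
    simp only [Finset.coe_insert, Finset.coe_singleton, Set.mem_insert_iff,
      Set.mem_singleton_iff] at hk
    rcases hk with rfl | rfl | rfl <;> simp [r, hℓ, Ne.symm hcj]
  · congr! 1
    funext k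
    by_cases hkc : k = c
    · subst hkc; simp [r, hcj]
    · by_cases hkj : k = j
      · subst hkj; simp [r, hkc]
      · simp [r, hkc, hkj]

lemma BexClosed.exists_sepInstance (hM : SatDB0 E) (hA : BexClosed E (IsPi m)) {τ : Fml}
    (hτ : IsPi m τ) (c : ℕ) {s₀ t : ℕ} (h₀t : s₀ ≠ t) (v : ℕ → M) :
    ∃ Φ e, IsPi m Φ ∧ Φ.fv ⊆ {s₀, t} ∧
      ∀ u, u t = e → (Sat E u Φ ↔ Sat E (update v c (u s₀)) τ) := by
  obtain ⟨ℓ, hℓτ, hℓ⟩ := τ.exists_fresh {c}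
  rw [Finset.mem_singleton] at hℓ
  let r (k : ℕ) : ℕ := if k = c then s₀ else if k = ℓ then t else k + (s₀ + t + 1)
  have hr : Injective r := by
    intro a b h
    simp only [r] at h
    split_ifs at h <;> omega
  obtain ⟨Φ, e, hΦ, hfv, hsat⟩ := hA.exists_rename_pack hM hτ v {c} hℓτ (by simpa using hℓ) hr
  refine ⟨Φ, e, hΦ, hfv.trans ?_, fun u hu => (hsat u (by simpa [r, hℓ] using hu)).trans ?_⟩
  · rintro _ ⟨k, hk, rfl⟩
    simp only [Finset.coe_singleton, Set.mem_insert_iff, Set.mem_singleton_iff] at hk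
    rcases hk with rfl | rfl <;> simp [r, hℓ]
  · congr! 1
    funext k
    by_cases hkc : k = c
    · subst hkc; simp [r]
    · simp [r, hkc]

end Packing

section Schemes

variable {M : Type} {E : M → M → Prop} {m n : ℕ}

lemma val3_eq_update (x y v : M) : val3 x y v = update (update (fun _ => v) 0 x) 1 y := by
  funext k
  rcases eq_or_ne k 0 with rfl | h0
  · rfl
  rcases eq_or_ne k 1 with rfl | h1
  · rfl
  · simp [val3, h0, h1]

lemma val2_eq_update (x v : M) : val2 x v = update (fun _ => v) 0 x := by
  funext k
  rcases eq_or_ne k 0 with rfl | h0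
  · rfl
  · simp [val2, h0]

lemma CollScheme.of_definable {Γ Γ' : Fml → Prop} (h : CollScheme E Γ')
    (hΓ : ∀ φ, Γ φ → Definable E Γ' φ.fv (Sat E · φ)) : CollScheme E Γ := by
  intro φ hφ hfv v p htot
  obtain ⟨φ', hφ', hfv', hsat⟩ := hΓ φ hφ
  simp only [← hsat] at htot ⊢
  exact h φ' hφ' (hfv'.trans hfv) v p htot

lemma CollSScheme.of_definable {Γ Γ' : Fml → Prop} (h : CollSScheme E Γ')
    (hΓ : ∀ φ, Γ φ → Definable E Γ' φ.fv (Sat E · φ)) : CollSScheme E Γ := by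
  intro φ hφ hfv v p
  obtain ⟨φ', hφ', hfv', hsat⟩ := hΓ φ hφ
  simp only [← hsat]
  exact h φ' hφ' (hfv'.trans hfv) v p

lemma CollSScheme.collScheme {Γ : Fml → Prop} (h : CollSScheme E Γ) : CollScheme E Γ := by
  intro φ hφ hfv v p htot
  obtain ⟨q, hq⟩ := h φ hφ hfv v p
  exact ⟨q, fun x hx => (hq x hx).1 (htot x hx)⟩

lemma CollScheme.isPi (hM : SatDB0 E) (h : CollScheme E (IsSigma (n + 1))) (hmn : m ≤ n) :
    CollScheme E (IsPi m) :=
  have := hM.nonempty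
  h.of_definable fun _ hφ => (Definable.of_formula hφ).sigma_of_pi (Nat.lt_succ_of_le hmn)

lemma CollSScheme.isPi (hM : SatDB0 E) (h : CollSScheme E (IsSigma (n + 1))) (hmn : m ≤ n) :
    CollSScheme E (IsPi m) :=
  have := hM.nonempty
  h.of_definable fun _ hφ => (Definable.of_formula hφ).sigma_of_pi (Nat.lt_succ_of_le hmn)

lemma CollScheme.exists_params (hM : SatDB0 E) (hC : CollScheme E (IsPi m))
    (hA : BexClosed E (IsPi m)) {τ : Fml} (hτ : IsPi m τ) {c j : ℕ} (hcj : c ≠ j)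
    (v : ℕ → M) (p : M) (htot : ∀ x, E x p → ∃ y, Sat E (update (update v c x) j y) τ) :
    ∃ q, ∀ x, E x p → ∃ y, E y q ∧ Sat E (update (update v c x) j y) τ := by
  obtain ⟨Φ, e, hΦ, hfv, hsat⟩ :=
    hA.exists_collInstance hM hτ hcj (s₀ := 0) (s₁ := 1) (t := 2) (by simp) (by simp) (by simp) v
  have key : ∀ x y, Sat E (val3 x y e) Φ ↔ Sat E (update (update v c x) j y) τ :=
    fun x y => hsat _ rfl
  simp only [← key] at htot ⊢
  exact hC Φ hΦ hfv e p htot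

lemma CollSScheme.exists_params (hM : SatDB0 E) (hC : CollSScheme E (IsPi m))
    (hA : BexClosed E (IsPi m)) {τ : Fml} (hτ : IsPi m τ) {c j : ℕ} (hcj : c ≠ j)
    (v : ℕ → M) (p : M) :
    ∃ q, ∀ x, E x p → ((∃ y, Sat E (update (update v c x) j y) τ) ↔
      ∃ y, E y q ∧ Sat E (update (update v c x) j y) τ) := by
  obtain ⟨Φ, e, hΦ, hfv, hsat⟩ :=
    hA.exists_collInstance hM hτ hcj (s₀ := 0) (s₁ := 1) (t := 2) (by simp) (by simp) (by simp) v
  have key : ∀ x y, Sat E (val3 x y e) Φ ↔ Sat E (update (update v c x) j y) τ :=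
    fun x y => hsat _ rfl
  simp only [← key]
  exact hC Φ hΦ hfv e p

/-- Separation for the formulas of `C`, with arbitrarily many parameters. -/
def SepParams (E : M → M → Prop) (C : Fml → Prop) : Prop :=
  ∀ φ, C φ → ∀ (c : ℕ) (v : ℕ → M) (p : M),
    ∃ q, ∀ x, E x q ↔ E x p ∧ Sat E (update v c x) φ

lemma SepParams.sepScheme {C : Fml → Prop} (h : SepParams E C) : SepScheme E C := by
  intro φ hφ _ v p
  simpa only [val2_eq_update] using h φ hφ 0 (fun _ => v) p

lemma sepParams_delta0 (hM : SatDB0 E) : SepParams E IsDelta0 := by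
  intro τ hτ c v p
  obtain ⟨Φ, e, hΦ, hfv, hsat⟩ :=
    bexClosed_delta0.exists_sepInstance (m := 0) hM hτ c (s₀ := 0) (t := 1) (by simp) v
  obtain ⟨q, hq⟩ := hM.sepScheme_delta0 Φ hΦ hfv e p
  exact ⟨q, fun x => (hq x).trans (and_congr_right fun _ => hsat _ rfl)⟩

lemma SepParams.isPi (hM : SatDB0 E) (h : SepParams E (IsSigma n)) : SepParams E (IsPi n) := by
  intro ρ hρ c v p
  obtain ⟨σ, hσ, -, hσρ⟩ := (Definable.of_formula (E := E) hρ).not_pi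
  obtain ⟨q₁, hq₁⟩ := h σ hσ c v p
  obtain ⟨q, hq⟩ := hM.sepScheme_delta0 (Fml.mem 0 1).not (.not (.mem 0 1))
    (by intro k; simp +contextual) q₁ p
  refine ⟨q, fun x => ?_⟩
  have := hq₁ x
  simp only [hq, sat_not, sat_mem, val2, if_true, one_ne_zero, if_false, hσρ] at this ⊢
  tauto

lemma SepScheme.sepParams (hM : SatDB0 E) (hS : SepScheme E (IsSigma (n + 1)))
    (hA : BexClosed E (IsPi n)) : SepParams E (IsSigma (n + 1)) := by
  rintro _ ⟨i, ψ, hψ, rfl⟩ c v p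
  obtain ⟨i', hi'ψ, hi'c⟩ := ψ.exists_fresh {c}
  rw [Finset.mem_singleton] at hi'c
  obtain ⟨Φ, e, hΦ, hfv, hsat⟩ := hA.exists_collInstance hM
    (IsPi.rename (Equiv.swap i i').injective hψ) (Ne.symm hi'c) (s₀ := 0) (s₁ := 2) (t := 1)
    (by simp) (by simp) (by simp) v
  have hfv' : (Fml.ex 2 Φ).fv ⊆ {0, 1} := by
    intro k ⟨hk, hk2⟩
    rcases hfv hk with rfl | rfl | rfl
    exacts [Or.inl rfl, absurd rfl hk2, Or.inr rfl]
  obtain ⟨q, hq⟩ := hS (.ex 2 Φ) ⟨2, Φ, hΦ, rfl⟩ hfv' e p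
  refine ⟨q, fun x => (hq x).trans (and_congr_right fun _ => ?_)⟩
  simp only [sat_ex]
  refine exists_congr fun w => (hsat _ (by simp [val2])).trans ?_
  simp [val2, sat_update_rename_swap hi'ψ]

lemma SepParams.isSigma_succ (hM : SatDB0 E) (hC : CollSScheme E (IsPi n))
    (hA : BexClosed E (IsPi n)) (h : SepParams E (IsPi n)) : SepParams E (IsSigma (n + 1)) := by
  rintro _ ⟨i, ψ, hψ, rfl⟩ c v p
  obtain ⟨i', hi'ψ, hi'c⟩ := ψ.exists_fresh {c}
  rw [Finset.mem_singleton] at hi'c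
  set ψ' := ψ.rename (Equiv.swap i i')
  have hψ' : IsPi n ψ' := IsPi.rename (Equiv.swap i i').injective hψ
  -- replace the unbounded witness by one bounded by the set `q₀` given by strong collection
  obtain ⟨q₀, hq₀⟩ := hC.exists_params hM hA hψ' (Ne.symm hi'c) v p
  obtain ⟨d, hdψ', hd⟩ := ψ'.exists_fresh {c, i'}
  simp only [Finset.mem_insert, Finset.mem_singleton, not_or] at hd
  obtain ⟨χ, hχ, -, hχsat⟩ := hA.definable (.of_formula hψ') (Ne.symm hd.2)
  obtain ⟨q, hq⟩ := h χ hχ c (update v d q₀) p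
  refine ⟨q, fun x => (hq x).trans (and_congr_right fun hx => ?_)⟩
  have hdrop : ∀ a, Sat E (update (update (update v d q₀) c x) i' a) ψ' ↔
      Sat E (update (update v c x) i' a) ψ' := fun a => by
    rw [update_comm hd.1, update_comm hd.2, sat_update_of_notMem hdψ']
  rw [hχsat]
  dsimp only
  rw [update_of_ne hd.1, update_self]
  simp only [hdrop]
  rw [← hq₀ x hx, sat_ex]
  exact exists_congr fun a => sat_update_rename_swap hi'ψ _ a

end Schemes

section Collection

variable {M : Type} {E : M → M → Prop} {k n : ℕ}

lemma BexClosed.isSigma_succ (hA : BexClosed E (IsPi k)) : BexClosed E (IsSigma (k + 1)) := by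
  rintro _ ⟨i, ψ, hψ, rfl⟩ c d hcd
  obtain ⟨i', hi'ψ, hi'⟩ := ψ.exists_fresh {c, d}
  simp only [Finset.mem_insert, Finset.mem_singleton, not_or] at hi'
  have hψ' := IsPi.rename (Equiv.swap i i').injective hψ
  refine ((hA.definable (.of_formula hψ') hcd).ex i').mono ?_ |>.congr fun v => ?_
  · intro x hx
    have := @Fml.fv_rename_swap_subset i i' ψ hi'ψ x
    simp only [Set.mem_union, Set.mem_sdiff, Set.mem_singleton_iff] at hx this ⊢
    tauto
  · simp only [update_of_ne (Ne.symm hi'.2), sat_ex, update_comm hi'.1,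
      sat_update_rename_swap hi'ψ]
    exact ⟨fun ⟨w, a, ha, h⟩ => ⟨a, ha, w, h⟩, fun ⟨a, ha, w, h⟩ => ⟨w, a, ha, h⟩⟩

lemma exists_forall_iff_of_collection {D : M} {Q : M → M → Prop}
    (hcoll : (∀ a, E a D → ∃ w, ¬ Q a w) → ∃ q, ∀ a, E a D → ∃ w, E w q ∧ ¬ Q a w) :
    (∀ b, ∃ a, E a D ∧ ∀ w, E w b → Q a w) ↔ ∃ a, E a D ∧ ∀ w, Q a w := by
  refine ⟨fun h => by_contra fun hne => ?_, fun ⟨a, ha, h⟩ b => ⟨a, ha, fun w _ => h w⟩⟩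
  obtain ⟨q, hq⟩ := hcoll fun a ha => not_forall.1 fun hQ => hne ⟨a, ha, hQ⟩
  obtain ⟨a, ha, hQ⟩ := h q
  obtain ⟨w, hw, hnQ⟩ := hq a ha
  exact hnQ (hQ w hw)

lemma BexClosed.isPi_succ (hM : SatDB0 E) (hS : BexClosed E (IsSigma k))
    (hA : BexClosed E (IsPi k)) (hC : CollScheme E (IsPi k)) : BexClosed E (IsPi (k + 1)) := by
  have := hM.nonempty
  rintro _ ⟨j, σ, hσ, rfl⟩ c d hcd
  obtain ⟨j', hj'σ, hj'⟩ := σ.exists_fresh {c, d}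
  simp only [Finset.mem_insert, Finset.mem_singleton, not_or] at hj'
  set σ' := σ.rename (Equiv.swap j j')
  have hσ' : IsSigma k σ' := IsSigma.rename (Equiv.swap j j').injective hσ
  obtain ⟨B, hBσ', hB⟩ := σ'.exists_fresh {c, d, j'}
  simp only [Finset.mem_insert, Finset.mem_singleton, not_or] at hB
  -- `∃ a ∈ v d, ∀ w, σ` is equivalent to `∀ B, ∃ a ∈ v d, ∀ w ∈ B, σ`
  have hball := hA.definable_ball (.of_formula hσ') (Ne.symm hB.2.2)
  refine ((hS.definable hball hcd).all B).mono ?_ |>.congr fun v => ?_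
  · intro x hx
    have := @Fml.fv_rename_swap_subset j j' σ hj'σ x
    simp only [Set.mem_union, Set.mem_sdiff, Set.mem_singleton_iff] at hx this ⊢
    tauto
  · have hdrop : ∀ b a w, Sat E (update (update (update v B b) c a) j' w) σ' ↔
        Sat E (update (update v c a) j' w) σ' := fun b a w => by
      rw [update_comm hB.1, update_comm hB.2.2, sat_update_of_notMem hBσ']
    simp only [update_of_ne (Ne.symm hB.2.1), update_of_ne hB.1, update_self, hdrop, sat_all]
    refine (exists_forall_iff_of_collection fun htot => ?_).trans ?_
    · obtain ⟨ρ, hρ, -, hρσ⟩ := (Definable.of_formula (E := E) hσ').not_sigma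
      simp only [← hρσ] at htot ⊢
      exact hC.exists_params hM hA hρ (Ne.symm hj'.1) v (v d) htot
    · simp only [σ', sat_update_rename_swap hj'σ]

lemma bexClosed_of_collScheme (hM : SatDB0 E) (h : CollScheme E (IsSigma (n + 1))) :
    ∀ m ≤ n + 1, BexClosed E (IsSigma m) ∧ BexClosed E (IsPi m) := by
  intro m hm
  induction m with
  | zero => exact ⟨bexClosed_delta0, bexClosed_delta0⟩
  | succ k ih =>
    obtain ⟨hS, hA⟩ := ih (by omega)
    exact ⟨hA.isSigma_succ, BexClosed.isPi_succ hM hS hA (h.isPi hM (by omega))⟩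

lemma sepParams_of_collSScheme (hM : SatDB0 E) (h : CollSScheme E (IsSigma (n + 1))) :
    SepParams E (IsSigma (n + 1)) := by
  suffices ∀ k ≤ n + 1, SepParams E (IsSigma k) from this _ le_rfl
  intro k hk
  induction k with
  | zero => exact sepParams_delta0 hM
  | succ k ih =>
    exact ((ih (by omega)).isPi hM).isSigma_succ hM (h.isPi hM (by omega))
      (bexClosed_of_collScheme hM h.collScheme k (by omega)).2

lemma BexClosed.exists_contraction [Nonempty M] (hA : BexClosed E (IsPi n)) {ψ : Fml}
    (hψ : IsPi n ψ) (i j : ℕ) (X : Finset ℕ) :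
    ∃ W χ, W ∉ ψ.fv ∧ W ∉ X ∧ IsPi n χ ∧
      ∀ u, Sat E u χ ↔ ∃ y a, IsOPairOf E (u W) y a ∧ Sat E (update (update u j y) i a) ψ := by
  obtain ⟨i', hi'ψ, hi'j⟩ := ψ.exists_fresh {j}
  rw [Finset.mem_singleton] at hi'j
  have hψ' := IsPi.rename (Equiv.swap i i').injective hψ
  obtain ⟨W, hWψ, hW⟩ := ψ.exists_fresh (insert j (insert i' X))
  simp only [Finset.mem_insert, not_or] at hW
  obtain ⟨χ, hχ, -, hχsat⟩ :=
    hA.definable_exists_isOPairOf (.of_formula hψ') (Ne.symm hi'j) (Ne.symm hW.1) (Ne.symm hW.2.1)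
  exact ⟨W, χ, hWψ, hW.2.2, hχ, fun u => by simp [hχsat, sat_update_rename_swap hi'ψ]⟩

lemma collSScheme_of_collScheme_of_sepScheme (hM : SatDB0 E) (hC : CollScheme E (IsSigma (n + 1)))
    (hS : SepScheme E (IsSigma (n + 1))) : CollSScheme E (IsSigma (n + 1)) := by
  have := hM.nonempty
  have hA := (bexClosed_of_collScheme hM hC n (by omega)).2
  rintro _ ⟨i, ψ, hψ, rfl⟩ - v p
  obtain ⟨W, χ, hWψ, hW0, hχ, hχsat⟩ := hA.exists_contraction hψ i 1 {0}
  rw [Finset.mem_singleton] at hW0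
  set u₀ : M → ℕ → M := fun x => update (fun _ => v) 0 x
  have hdecode : ∀ x w, Sat E (update (u₀ x) W w) χ ↔
      ∃ y a, IsOPairOf E w y a ∧ Sat E (update (val3 x y v) i a) ψ := by
    intro x w
    simp only [hχsat, update_self, val3_eq_update]
    refine exists₂_congr fun y a => and_congr_right fun _ => sat_congr fun k hk => ?_
    simp [u₀, update_apply, hk.ne_of_notMem hWψ]
  -- separate the `x ∈ p` having a witness, then collect codes of witnesses for them
  obtain ⟨D, hD⟩ := (hS.sepParams hM hA) (.ex W χ) ⟨W, χ, hχ, rfl⟩ 0 (fun _ => v) p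
  obtain ⟨q, hq⟩ := (hC.isPi hM le_rfl).exists_params hM hA hχ (Ne.symm hW0) (fun _ => v) D
    fun x hx => by simpa using ((hD x).1 hx).2
  obtain ⟨U₁, hU₁⟩ := hM.exists_sUnion q
  obtain ⟨U, hU⟩ := hM.exists_sUnion U₁
  refine ⟨U, fun x hx => ⟨fun ⟨y, hy⟩ => ?_, fun ⟨y, _, hy⟩ => ⟨y, hy⟩⟩⟩
  have hxD : E x D := by
    rw [sat_ex] at hy
    obtain ⟨a, ha⟩ := hy
    obtain ⟨w, hw⟩ := hM.exists_isOPairOf y a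
    exact (hD x).2 ⟨hx, (sat_ex _ _ _).2 ⟨w, (hdecode x w).2 ⟨y, a, hw, ha⟩⟩⟩
  obtain ⟨w, hwq, hw⟩ := hq x hxD
  obtain ⟨y', a, hpair, hya⟩ := (hdecode x w).1 hw
  obtain ⟨t, htw, -⟩ := hpair.exists_snd_mem
  exact ⟨y', (hU y').2 ⟨t, (hU₁ t).2 ⟨w, hwq, htw⟩, hpair.fst_mem_of_mem htw⟩,
    (sat_ex _ _ _).2 ⟨a, hya⟩⟩

end Collection

/-- Over DB₀, Coll_s(Σ_{n+1}) is deductively equivalent to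
Coll(Σ_{n+1}) + Sep(Σ_{n+1}): a model of DB₀ satisfies all instances of
Coll_s(Σ_{n+1}) iff it satisfies all instances of Coll(Σ_{n+1}) and all
instances of Sep(Σ_{n+1}). -/
theorem collS_iff_coll_and_sep (n : ℕ) (M : Type) (E : M → M → Prop)
    (hM : SatDB0 E) :
    CollSScheme E (IsSigma (n + 1)) ↔
      CollScheme E (IsSigma (n + 1)) ∧ SepScheme E (IsSigma (n + 1)) :=
  ⟨fun h => ⟨h.collScheme, (sepParams_of_collSScheme hM h).sepScheme⟩,
    fun ⟨hC, hS⟩ => collSScheme_of_collScheme_of_sepScheme hM hC hS⟩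

end FOSet
end

section
/- For every natural number n ≥ 0, over the theory DB₀ the parameter-free schema Coll_s⁻(Σ_n) is deductively equivalent to the schema with parameters Coll_s(Σ_n). -/
namespace FOSet

namespace Fml

/-- All variables (free and bound) of a formula. -/
def vars : Fml → Finset ℕ
  | mem i j => {i, j}
  | eq i j => {i, j}
  | not φ => φ.vars
  | and φ ψ => φ.vars ∪ ψ.vars
  | or φ ψ => φ.vars ∪ ψ.vars
  | imp φ ψ => φ.vars ∪ ψ.vars
  | all i φ => insert i φ.vars
  | ex i φ => insert i φ.vars

/-- Naive substitution of variable `k'` for free occurrences of `k`. -/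
def subst : Fml → ℕ → ℕ → Fml
  | mem i j, k, k' => mem (if i = k then k' else i) (if j = k then k' else j)
  | eq i j, k, k' => eq (if i = k then k' else i) (if j = k then k' else j)
  | not φ, k, k' => not (subst φ k k')
  | and φ ψ, k, k' => and (subst φ k k') (subst ψ k k')
  | or φ ψ, k, k' => or (subst φ k k') (subst ψ k k')
  | imp φ ψ, k, k' => imp (subst φ k k') (subst ψ k k')
  | all i φ, k, k' => if i = k then all i φ else all i (subst φ k k')
  | ex i φ, k, k' => if i = k then ex i φ else ex i (subst φ k k')

lemma mem_vars_of_mem_fv : ∀ φ : Fml, ∀ x ∈ φ.fv, x ∈ φ.vars := by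
  intro φ
  induction φ with
  | mem i j => intro x hx; simpa [vars] using (by simpa [fv] using hx)
  | eq i j => intro x hx; simpa [vars] using (by simpa [fv] using hx)
  | not φ ih => intro x hx; simpa [vars] using ih x (by simpa [fv] using hx)
  | and φ ψ ih1 ih2 =>
      intro x hx
      rcases (by simpa [fv] using hx : x ∈ φ.fv ∨ x ∈ ψ.fv) with h | h
      · simp [vars, ih1 x h]
      · simp [vars, ih2 x h]
  | or φ ψ ih1 ih2 =>
      intro x hx
      rcases (by simpa [fv] using hx : x ∈ φ.fv ∨ x ∈ ψ.fv) with h | h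
      · simp [vars, ih1 x h]
      · simp [vars, ih2 x h]
  | imp φ ψ ih1 ih2 =>
      intro x hx
      rcases (by simpa [fv] using hx : x ∈ φ.fv ∨ x ∈ ψ.fv) with h | h
      · simp [vars, ih1 x h]
      · simp [vars, ih2 x h]
  | all i φ ih =>
      intro x hx
      have : x ∈ φ.fv := (by simpa [fv] using hx : x ∈ φ.fv ∧ x ≠ i).1
      simp [vars, ih x this]
  | ex i φ ih =>
      intro x hx
      have : x ∈ φ.fv := (by simpa [fv] using hx : x ∈ φ.fv ∧ x ≠ i).1
      simp [vars, ih x this]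

lemma mem_fv_subst : ∀ (φ : Fml) (k k' : ℕ), k' ∉ φ.vars →
    ∀ x ∈ (φ.subst k k').fv, (x ∈ φ.fv ∧ x ≠ k) ∨ x = k' := by
  intro φ
  induction φ with
  | mem i j =>
      intro k k' hk' x hx
      rcases (by simpa [subst, fv] using hx :
        x = (if i = k then k' else i) ∨ x = (if j = k then k' else j)) with h | h <;>
        · subst h
          split <;> simp_all [fv]
  | eq i j =>
      intro k k' hk' x hx
      rcases (by simpa [subst, fv] using hx :
        x = (if i = k then k' else i) ∨ x = (if j = k then k' else j)) with h | h <;>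
        · subst h
          split <;> simp_all [fv]
  | not φ ih => intro k k' hk' x hx; exact ih k k' (by simpa [vars] using hk') x (by simpa [subst, fv] using hx)
  | and φ ψ ih1 ih2 =>
      intro k k' hk' x hx
      rcases (by simpa [subst, fv] using hx : x ∈ (φ.subst k k').fv ∨ x ∈ (ψ.subst k k').fv) with h | h
      · rcases ih1 k k' (by simp [vars] at hk'; tauto) x h with ⟨h1, h2⟩ | h1
        · exact Or.inl ⟨by simp [fv]; tauto, h2⟩
        · exact Or.inr h1
      · rcases ih2 k k' (by simp [vars] at hk'; tauto) x h with ⟨h1, h2⟩ | h1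
        · exact Or.inl ⟨by simp [fv]; tauto, h2⟩
        · exact Or.inr h1
  | or φ ψ ih1 ih2 =>
      intro k k' hk' x hx
      rcases (by simpa [subst, fv] using hx : x ∈ (φ.subst k k').fv ∨ x ∈ (ψ.subst k k').fv) with h | h
      · rcases ih1 k k' (by simp [vars] at hk'; tauto) x h with ⟨h1, h2⟩ | h1
        · exact Or.inl ⟨by simp [fv]; tauto, h2⟩
        · exact Or.inr h1
      · rcases ih2 k k' (by simp [vars] at hk'; tauto) x h with ⟨h1, h2⟩ | h1
        · exact Or.inl ⟨by simp [fv]; tauto, h2⟩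
        · exact Or.inr h1
  | imp φ ψ ih1 ih2 =>
      intro k k' hk' x hx
      rcases (by simpa [subst, fv] using hx : x ∈ (φ.subst k k').fv ∨ x ∈ (ψ.subst k k').fv) with h | h
      · rcases ih1 k k' (by simp [vars] at hk'; tauto) x h with ⟨h1, h2⟩ | h1
        · exact Or.inl ⟨by simp [fv]; tauto, h2⟩
        · exact Or.inr h1
      · rcases ih2 k k' (by simp [vars] at hk'; tauto) x h with ⟨h1, h2⟩ | h1
        · exact Or.inl ⟨by simp [fv]; tauto, h2⟩
        · exact Or.inr h1
  | all i φ ih =>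
      intro k k' hk' x hx
      have hk'φ : k' ∉ φ.vars := by simp [vars] at hk'; tauto
      have hk'i : k' ≠ i := by simp [vars] at hk'; tauto
      by_cases hik : i = k
      · subst hik
        simp only [subst, if_pos rfl] at hx
        have := (by simpa [fv] using hx : x ∈ φ.fv ∧ x ≠ i)
        exact Or.inl ⟨by simp [fv]; tauto, this.2⟩
      · simp only [subst, if_neg hik] at hx
        have hx' := (by simpa [fv] using hx : x ∈ (φ.subst k k').fv ∧ x ≠ i)
        rcases ih k k' hk'φ x hx'.1 with ⟨h1, h2⟩ | h1
        · exact Or.inl ⟨by simp [fv]; exact ⟨h1, hx'.2⟩, h2⟩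
        · exact Or.inr h1
  | ex i φ ih =>
      intro k k' hk' x hx
      have hk'φ : k' ∉ φ.vars := by simp [vars] at hk'; tauto
      have hk'i : k' ≠ i := by simp [vars] at hk'; tauto
      by_cases hik : i = k
      · subst hik
        simp only [subst, if_pos rfl] at hx
        have := (by simpa [fv] using hx : x ∈ φ.fv ∧ x ≠ i)
        exact Or.inl ⟨by simp [fv]; tauto, this.2⟩
      · simp only [subst, if_neg hik] at hx
        have hx' := (by simpa [fv] using hx : x ∈ (φ.subst k k').fv ∧ x ≠ i)
        rcases ih k k' hk'φ x hx'.1 with ⟨h1, h2⟩ | h1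
        · exact Or.inl ⟨by simp [fv]; exact ⟨h1, hx'.2⟩, h2⟩
        · exact Or.inr h1

end Fml

end FOSet

namespace FOSet

lemma satIn_congr {N : Type} (E : N → N → Prop) (S : Set N) :
    ∀ (φ : Fml) (v w : ℕ → N), (∀ k ∈ φ.fv, v k = w k) →
      (SatIn E S v φ ↔ SatIn E S w φ) := by
  intro φ
  induction φ with
  | mem i j => intro v w h; simp [SatIn, h i (by simp [Fml.fv]), h j (by simp [Fml.fv])]
  | eq i j => intro v w h; simp [SatIn, h i (by simp [Fml.fv]), h j (by simp [Fml.fv])]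
  | not φ ih => intro v w h; simp [SatIn, ih v w h]
  | and φ ψ ih1 ih2 =>
      intro v w h
      simp [SatIn, ih1 v w (fun k hk => h k (by simp [Fml.fv]; tauto)),
        ih2 v w (fun k hk => h k (by simp [Fml.fv]; tauto))]
  | or φ ψ ih1 ih2 =>
      intro v w h
      simp [SatIn, ih1 v w (fun k hk => h k (by simp [Fml.fv]; tauto)),
        ih2 v w (fun k hk => h k (by simp [Fml.fv]; tauto))]
  | imp φ ψ ih1 ih2 =>
      intro v w h
      simp [SatIn, ih1 v w (fun k hk => h k (by simp [Fml.fv]; tauto)),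
        ih2 v w (fun k hk => h k (by simp [Fml.fv]; tauto))]
  | all i φ ih =>
      intro v w h
      simp only [SatIn]
      refine forall₂_congr (fun a _ => ?_)
      refine ih _ _ (fun k hk => ?_)
      by_cases hki : k = i
      · subst hki; simp
      · simp [Function.update_of_ne hki, h k (by simp [Fml.fv]; exact ⟨hk, hki⟩)]
  | ex i φ ih =>
      intro v w h
      simp only [SatIn]
      refine exists_congr (fun a => and_congr_right (fun _ => ?_))
      refine ih _ _ (fun k hk => ?_)
      by_cases hki : k = i
      · subst hki; simp
      · simp [Function.update_of_ne hki, h k (by simp [Fml.fv]; exact ⟨hk, hki⟩)]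

lemma satIn_subst {N : Type} (E : N → N → Prop) (S : Set N) :
    ∀ (φ : Fml) (k k' : ℕ), k' ∉ φ.vars → ∀ (v : ℕ → N),
      (SatIn E S v (φ.subst k k') ↔ SatIn E S (Function.update v k (v k')) φ) := by
  intro φ
  induction φ with
  | mem i j =>
      intro k k' hk' v
      have h1 : (Function.update v k (v k')) i = v (if i = k then k' else i) := by
        by_cases hik : i = k
        · subst hik; simp
        · simp [Function.update_of_ne hik, hik]
      have h2 : (Function.update v k (v k')) j = v (if j = k then k' else j) := by
        by_cases hjk : j = k
        · subst hjk; simp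
        · simp [Function.update_of_ne hjk, hjk]
      simp [Fml.subst, SatIn, h1, h2]
  | eq i j =>
      intro k k' hk' v
      have h1 : (Function.update v k (v k')) i = v (if i = k then k' else i) := by
        by_cases hik : i = k
        · subst hik; simp
        · simp [Function.update_of_ne hik, hik]
      have h2 : (Function.update v k (v k')) j = v (if j = k then k' else j) := by
        by_cases hjk : j = k
        · subst hjk; simp
        · simp [Function.update_of_ne hjk, hjk]
      simp [Fml.subst, SatIn, h1, h2]
  | not φ ih => intro k k' hk' v; simp [Fml.subst, SatIn, ih k k' (by simpa [Fml.vars] using hk') v]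
  | and φ ψ ih1 ih2 =>
      intro k k' hk' v
      simp only [Fml.vars, Finset.mem_union] at hk'
      simp [Fml.subst, SatIn, ih1 k k' (by tauto) v, ih2 k k' (by tauto) v]
  | or φ ψ ih1 ih2 =>
      intro k k' hk' v
      simp only [Fml.vars, Finset.mem_union] at hk'
      simp [Fml.subst, SatIn, ih1 k k' (by tauto) v, ih2 k k' (by tauto) v]
  | imp φ ψ ih1 ih2 =>
      intro k k' hk' v
      simp only [Fml.vars, Finset.mem_union] at hk'
      simp [Fml.subst, SatIn, ih1 k k' (by tauto) v, ih2 k k' (by tauto) v]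
  | all i φ ih =>
      intro k k' hk' v
      simp only [Fml.vars, Finset.mem_insert] at hk'
      have hk'i : k' ≠ i := by tauto
      have hk'φ : k' ∉ φ.vars := by tauto
      by_cases hik : i = k
      · subst hik
        simp only [Fml.subst, if_pos rfl, SatIn]
        refine forall₂_congr (fun a _ => ?_)
        rw [Function.update_idem]
      · simp only [Fml.subst, if_neg hik, SatIn]
        refine forall₂_congr (fun a _ => ?_)
        rw [ih k k' hk'φ]
        rw [Function.update_of_ne hk'i]
        rw [Function.update_comm hik]
  | ex i φ ih =>
      intro k k' hk' v
      simp only [Fml.vars, Finset.mem_insert] at hk'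
      have hk'i : k' ≠ i := by tauto
      have hk'φ : k' ∉ φ.vars := by tauto
      by_cases hik : i = k
      · subst hik
        simp only [Fml.subst, if_pos rfl, SatIn]
        refine exists_congr (fun a => and_congr_right (fun _ => ?_))
        rw [Function.update_idem]
      · simp only [Fml.subst, if_neg hik, SatIn]
        refine exists_congr (fun a => and_congr_right (fun _ => ?_))
        rw [ih k k' hk'φ]
        rw [Function.update_of_ne hk'i]
        rw [Function.update_comm hik]

lemma isDelta0_subst : ∀ (φ : Fml), IsDelta0 φ → ∀ (k k' : ℕ), k' ∉ φ.vars →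
    IsDelta0 (φ.subst k k') := by
  intro φ hφ
  induction hφ with
  | mem i j => intro k k' h; exact IsDelta0.mem _ _
  | eq i j => intro k k' h; exact IsDelta0.eq _ _
  | not _ ih => intro k k' h; exact IsDelta0.not (ih k k' (by simpa [Fml.vars] using h))
  | and _ _ ih1 ih2 =>
      intro k k' h; simp only [Fml.vars, Finset.mem_union] at h
      exact IsDelta0.and (ih1 k k' (by tauto)) (ih2 k k' (by tauto))
  | or _ _ ih1 ih2 =>
      intro k k' h; simp only [Fml.vars, Finset.mem_union] at h
      exact IsDelta0.or (ih1 k k' (by tauto)) (ih2 k k' (by tauto))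
  | imp _ _ ih1 ih2 =>
      intro k k' h; simp only [Fml.vars, Finset.mem_union] at h
      exact IsDelta0.imp (ih1 k k' (by tauto)) (ih2 k k' (by tauto))
  | @ball i j φ hij _ ih =>
      intro k k' h
      simp only [Fml.vars, Finset.mem_insert, Finset.mem_union] at h
      push_neg at h
      by_cases hik : i = k
      · simpa [Fml.subst, hik] using IsDelta0.ball hij (by assumption)
      · have : (Fml.all i ((Fml.mem i j).imp φ)).subst k k'
            = Fml.all i ((Fml.mem i (if j = k then k' else j)).imp (φ.subst k k')) := by
          simp [Fml.subst, hik]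
        rw [this]
        refine IsDelta0.ball ?_ (ih k k' (by tauto))
        split
        · exact fun hh => h.1 hh.symm
        · exact hij
  | @bex i j φ hij _ ih =>
      intro k k' h
      simp only [Fml.vars, Finset.mem_insert, Finset.mem_union] at h
      push_neg at h
      by_cases hik : i = k
      · simpa [Fml.subst, hik] using IsDelta0.bex hij (by assumption)
      · have : (Fml.ex i ((Fml.mem i j).and φ)).subst k k'
            = Fml.ex i ((Fml.mem i (if j = k then k' else j)).and (φ.subst k k')) := by
          simp [Fml.subst, hik]
        rw [this]
        refine IsDelta0.bex ?_ (ih k k' (by tauto))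
        split
        · exact fun hh => h.1 hh.symm
        · exact hij

end FOSet

namespace FOSet

lemma isSigma_zero {φ : Fml} : IsSigma 0 φ ↔ IsDelta0 φ := Iff.rfl
lemma isPi_zero {φ : Fml} : IsPi 0 φ ↔ IsDelta0 φ := Iff.rfl
lemma isSigma_succ {n : ℕ} {φ : Fml} :
    IsSigma (n + 1) φ ↔ ∃ i ψ, IsPi n ψ ∧ φ = Fml.ex i ψ := Iff.rfl
lemma isPi_succ {n : ℕ} {φ : Fml} :
    IsPi (n + 1) φ ↔ ∃ i ψ, IsSigma n ψ ∧ φ = Fml.all i ψ := Iff.rfl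

lemma isSigma_isPi_subst : ∀ n : ℕ,
    (∀ φ, IsSigma n φ → ∀ k k', k' ∉ φ.vars → IsSigma n (φ.subst k k')) ∧
    (∀ φ, IsPi n φ → ∀ k k', k' ∉ φ.vars → IsPi n (φ.subst k k')) := by
  intro n
  induction n with
  | zero =>
      exact ⟨fun φ h k k' hk => isDelta0_subst φ h k k' hk,
        fun φ h k k' hk => isDelta0_subst φ h k k' hk⟩
  | succ n ih =>
      constructor
      · rintro φ ⟨i, ψ, hψ, rfl⟩ k k' hk'
        simp only [Fml.vars, Finset.mem_insert] at hk'
        by_cases hik : i = k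
        · exact ⟨i, ψ, hψ, by simp [Fml.subst, hik]⟩
        · exact ⟨i, ψ.subst k k', ih.2 ψ hψ k k' (by tauto), by simp [Fml.subst, hik]⟩
      · rintro φ ⟨i, ψ, hψ, rfl⟩ k k' hk'
        simp only [Fml.vars, Finset.mem_insert] at hk'
        by_cases hik : i = k
        · exact ⟨i, ψ, hψ, by simp [Fml.subst, hik]⟩
        · exact ⟨i, ψ.subst k k', ih.1 ψ hψ k k' (by tauto), by simp [Fml.subst, hik]⟩

/-- The Δ₀ "pair decoding" matrix: s = {a}, t = {a, b}, z (var 0) = {s, t},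
conjoined with χ. -/
def decMatrix (s a t b w : ℕ) (χ : Fml) : Fml :=
  (Fml.all w ((Fml.mem w s).imp (Fml.eq w a))).and
  (((Fml.all w ((Fml.mem w t).imp ((Fml.eq w a).or (Fml.eq w b)))).and
  (((Fml.all w ((Fml.mem w 0).imp ((Fml.eq w s).or (Fml.eq w t)))).and χ))))

/-- ∃s∈z ∃a∈s ∃t∈z ∃b∈t (decMatrix ∧ χ). -/
def exDecode (s a t b w : ℕ) (χ : Fml) : Fml :=
  Fml.ex s ((Fml.mem s 0).and (Fml.ex a ((Fml.mem a s).and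
    (Fml.ex t ((Fml.mem t 0).and (Fml.ex b ((Fml.mem b t).and (decMatrix s a t b w χ))))))))

lemma isDelta0_exDecode {s a t b w : ℕ} {χ : Fml}
    (h1 : s ≠ 0) (h3 : t ≠ 0) (h5 : w ≠ 0)
    (h6 : a ≠ s) (h9 : w ≠ s)
    (h13 : b ≠ t) (h14 : w ≠ t)
    (hχ : IsDelta0 χ) : IsDelta0 (exDecode s a t b w χ) := by
  refine IsDelta0.bex h1 (IsDelta0.bex h6 (IsDelta0.bex h3 (IsDelta0.bex h13 ?_)))
  refine IsDelta0.and (IsDelta0.ball h9 (IsDelta0.eq _ _))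
    (IsDelta0.and (IsDelta0.ball h14 (IsDelta0.or (IsDelta0.eq _ _) (IsDelta0.eq _ _)))
      (IsDelta0.and (IsDelta0.ball h5 (IsDelta0.or (IsDelta0.eq _ _) (IsDelta0.eq _ _))) hχ))

lemma fv_exDecode {s a t b w : ℕ} {χ : Fml} :
    ∀ x ∈ (exDecode s a t b w χ).fv, x = 0 ∨ (x ∈ χ.fv ∧ x ∉ ({s, a, t, b} : Set ℕ)) := by
  intro x hx
  simp only [exDecode, decMatrix, Fml.fv, Set.mem_union, Set.mem_diff,
    Set.mem_insert_iff, Set.mem_singleton_iff] at hx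
  by_cases hx0 : x = 0
  · exact Or.inl hx0
  · right
    simp only [Set.mem_insert_iff, Set.mem_singleton_iff]
    tauto

end FOSet

namespace FOSet

variable {M : Type}

/-- Semantic pair decoding. -/
def DecSem (E : M → M → Prop) (z A B : M) : Prop :=
  ∃ S T : M, E S z ∧ E A S ∧ E T z ∧ E B T ∧ (∀ y, E y S → y = A) ∧
    (∀ y, E y T → y = A ∨ y = B) ∧ (∀ y, E y z → y = S ∨ y = T)

/-- `z` decodes uniquely to the pair `(x, v)`. -/
def GoodPair (E : M → M → Prop) (z x v : M) : Prop :=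
  DecSem E z x v ∧ ∀ A B, DecSem E z A B → A = x ∧ B = v

lemma sat_exDecode (E : M → M → Prop) {s a t b w : ℕ} (χ : Fml)
    (h1 : s ≠ 0) (h2 : a ≠ 0) (h3 : t ≠ 0) (h4 : b ≠ 0) (h5 : w ≠ 0)
    (h6 : a ≠ s) (h7 : t ≠ s) (h8 : b ≠ s) (h9 : w ≠ s)
    (h10 : t ≠ a) (h11 : b ≠ a) (h12 : w ≠ a)
    (h13 : b ≠ t) (h14 : w ≠ t) (h15 : w ≠ b)
    (u : ℕ → M) :
    Sat E u (exDecode s a t b w χ) ↔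
      ∃ S, E S (u 0) ∧ ∃ A, E A S ∧ ∃ T, E T (u 0) ∧ ∃ B, E B T ∧
        ((∀ y, E y S → y = A) ∧ ((∀ y, E y T → (y = A ∨ y = B)) ∧
          ((∀ y, E y (u 0) → (y = S ∨ y = T)) ∧
            SatIn E Set.univ
              (Function.update (Function.update (Function.update
                (Function.update u s S) a A) t T) b B) χ))) := by
  simp only [Sat, exDecode, decMatrix, SatIn, Set.mem_univ, true_and, true_implies,
    Function.update_self,
    Function.update_of_ne h1, Function.update_of_ne h2,
    Function.update_of_ne h3, Function.update_of_ne h4, Function.update_of_ne h5,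
    Function.update_of_ne h6, Function.update_of_ne h7, Function.update_of_ne h8,
    Function.update_of_ne h9, Function.update_of_ne h10, Function.update_of_ne h11,
    Function.update_of_ne h12, Function.update_of_ne h13, Function.update_of_ne h14,
    Function.update_of_ne h1.symm, Function.update_of_ne h2.symm,
    Function.update_of_ne h3.symm, Function.update_of_ne h4.symm,
    Function.update_of_ne h5.symm,
    Function.update_of_ne h6.symm, Function.update_of_ne h7.symm,
    Function.update_of_ne h8.symm, Function.update_of_ne h9.symm,
    Function.update_of_ne h10.symm, Function.update_of_ne h11.symm,
    Function.update_of_ne h12.symm, Function.update_of_ne h13.symm,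
    Function.update_of_ne h14.symm,
    Function.update_of_ne h15, Function.update_of_ne h15.symm]

end FOSet

namespace FOSet

namespace Fml
lemma mem_vars_subst : ∀ (φ : Fml) (k k' : ℕ), ∀ x ∈ (φ.subst k k').vars,
    x ∈ φ.vars ∨ x = k' := by
  intro φ
  induction φ with
  | mem i j =>
      intro k k' x hx
      rcases (by simpa [subst, vars] using hx :
        x = (if i = k then k' else i) ∨ x = (if j = k then k' else j)) with h | h <;>
        · subst h; split <;> simp_all [vars]
  | eq i j =>
      intro k k' x hx
      rcases (by simpa [subst, vars] using hx :
        x = (if i = k then k' else i) ∨ x = (if j = k then k' else j)) with h | h <;>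
        · subst h; split <;> simp_all [vars]
  | not φ ih => intro k k' x hx; exact ih k k' x (by simpa [subst, vars] using hx)
  | and φ ψ ih1 ih2 =>
      intro k k' x hx
      rcases (by simpa [subst, vars] using hx :
        x ∈ (φ.subst k k').vars ∨ x ∈ (ψ.subst k k').vars) with h | h
      · rcases ih1 k k' x h with h' | h'
        · exact Or.inl (by simp [vars]; tauto)
        · exact Or.inr h'
      · rcases ih2 k k' x h with h' | h'
        · exact Or.inl (by simp [vars]; tauto)
        · exact Or.inr h'
  | or φ ψ ih1 ih2 =>
      intro k k' x hx
      rcases (by simpa [subst, vars] using hx :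
        x ∈ (φ.subst k k').vars ∨ x ∈ (ψ.subst k k').vars) with h | h
      · rcases ih1 k k' x h with h' | h'
        · exact Or.inl (by simp [vars]; tauto)
        · exact Or.inr h'
      · rcases ih2 k k' x h with h' | h'
        · exact Or.inl (by simp [vars]; tauto)
        · exact Or.inr h'
  | imp φ ψ ih1 ih2 =>
      intro k k' x hx
      rcases (by simpa [subst, vars] using hx :
        x ∈ (φ.subst k k').vars ∨ x ∈ (ψ.subst k k').vars) with h | h
      · rcases ih1 k k' x h with h' | h'
        · exact Or.inl (by simp [vars]; tauto)
        · exact Or.inr h'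
      · rcases ih2 k k' x h with h' | h'
        · exact Or.inl (by simp [vars]; tauto)
        · exact Or.inr h'
  | all i φ ih =>
      intro k k' x hx
      by_cases hik : i = k
      · simp only [subst, if_pos hik] at hx; exact Or.inl hx
      · simp only [subst, if_neg hik, vars, Finset.mem_insert] at hx
        rcases hx with h | h
        · exact Or.inl (by simp [vars]; tauto)
        · rcases ih k k' x h with h' | h'
          · exact Or.inl (by simp [vars]; tauto)
          · exact Or.inr h'
  | ex i φ ih =>
      intro k k' x hx
      by_cases hik : i = k
      · simp only [subst, if_pos hik] at hx; exact Or.inl hx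
      · simp only [subst, if_neg hik, vars, Finset.mem_insert] at hx
        rcases hx with h | h
        · exact Or.inl (by simp [vars]; tauto)
        · rcases ih k k' x h with h' | h'
          · exact Or.inl (by simp [vars]; tauto)
          · exact Or.inr h'
end Fml

/-- The desired properties of the parameter-eliminating transform. -/
def TransGood (Γ : Fml → Prop) (φ ψ : Fml) : Prop :=
  Γ ψ ∧ (∀ x ∈ ψ.fv, (x ∈ φ.fv ∧ x ≠ 2) ∨ x = 0) ∧
  ∀ (M : Type) (E : M → M → Prop) (x v : M) (u : ℕ → M), GoodPair E (u 0) x v →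
    (Sat E u ψ ↔ Sat E (Function.update (Function.update u 0 x) 2 v) φ)

lemma base_transform (δ : Fml) (hδ : IsDelta0 δ) :
    ∃ ψ : Fml, IsDelta0 ψ ∧ TransGood IsDelta0 δ ψ := by
  classical
  set F : Finset ℕ := δ.vars ∪ {0, 1, 2} with hF
  set N : ℕ := F.sup id with hN
  have hle : ∀ x ∈ δ.vars, x ≤ N := fun x hx =>
    Finset.le_sup (f := id) (Finset.mem_union_left _ hx)
  have hout : ∀ x, N < x → x ∉ δ.vars := fun x hx h => by
    have := hle x h; omega
  set a := N + 1; set b := N + 2; set s := N + 3; set t := N + 4; set w := N + 5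
  have h2N : 2 ≤ N := Finset.le_sup (f := id) (by simp [hF])
  have hbδ : b ∉ δ.vars := hout _ (by omega)
  have haδ' : a ∉ (δ.subst 2 b).vars := by
    intro h
    rcases Fml.mem_vars_subst _ _ _ _ h with h' | h'
    · exact hout _ (by omega) h'
    · omega
  set χ : Fml := (δ.subst 2 b).subst 0 a with hχ
  have hχvars : ∀ x ∈ χ.vars, x ≤ N + 2 := by
    intro x hx
    rcases Fml.mem_vars_subst _ _ _ _ hx with h' | h'
    · rcases Fml.mem_vars_subst _ _ _ _ h' with h'' | h''
      · exact le_trans (hle _ h'') (by omega)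
      · omega
    · omega
  have hχd : IsDelta0 χ := isDelta0_subst _ (isDelta0_subst _ hδ 2 b hbδ) 0 a haδ'
  refine ⟨exDecode s a t b w χ,
    isDelta0_exDecode (by omega) (by omega) (by omega) (by omega) (by omega)
      (by omega) (by omega) hχd, ?_, ?_, ?_⟩
  · exact isDelta0_exDecode (by omega) (by omega) (by omega) (by omega) (by omega)
      (by omega) (by omega) hχd
  · -- free variables
    intro x hx
    rcases fv_exDecode x hx with h | ⟨h1, h2⟩
    · exact Or.inr h
    · simp only [Set.mem_insert_iff, Set.mem_singleton_iff] at h2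
      push_neg at h2
      rcases Fml.mem_fv_subst _ 0 a haδ' x h1 with ⟨h3, h4⟩ | h3
      · rcases Fml.mem_fv_subst _ 2 b hbδ x h3 with ⟨h5, h6⟩ | h5
        · exact Or.inl ⟨h5, h6⟩
        · exact absurd h5 (by tauto)
      · exact absurd h3 (by tauto)
  · -- semantics
    intro M E x v u hgp
    have hchain : ∀ S A T B : M,
        SatIn E Set.univ (Function.update (Function.update (Function.update
          (Function.update u s S) a A) t T) b B) χ ↔
        Sat E (Function.update (Function.update u 0 A) 2 B) δ := by
      intro S A T B
      set u4 := Function.update (Function.update (Function.update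
        (Function.update u s S) a A) t T) b B with hu4
      have hu4a : u4 a = A := by
        simp [hu4, Function.update_of_ne (show a ≠ b by omega),
          Function.update_of_ne (show a ≠ t by omega)]
      have hu4b : u4 b = B := by simp [hu4]
      rw [hχ, satIn_subst E Set.univ _ 0 a haδ', hu4a]
      rw [satIn_subst E Set.univ _ 2 b hbδ]
      have hb' : (Function.update u4 0 A) b = B := by
        rw [Function.update_of_ne (show b ≠ 0 by omega)]; exact hu4b
      rw [hb']
      refine satIn_congr E Set.univ δ _ _ (fun k hk => ?_)
      have hkv : k ∈ δ.vars := Fml.mem_vars_of_mem_fv δ k hk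
      have hkN : k ≤ N := hle k hkv
      by_cases hk2 : k = 2
      · subst hk2; simp
      · rw [Function.update_of_ne hk2, Function.update_of_ne hk2]
        by_cases hk0 : k = 0
        · subst hk0; simp
        · rw [Function.update_of_ne hk0, Function.update_of_ne hk0, hu4]
          rw [Function.update_of_ne (show k ≠ b by omega),
            Function.update_of_ne (show k ≠ t by omega),
            Function.update_of_ne (show k ≠ a by omega),
            Function.update_of_ne (show k ≠ s by omega)]
    rw [sat_exDecode E χ (by omega) (by omega) (by omega) (by omega) (by omega)
      (by omega) (by omega) (by omega) (by omega) (by omega) (by omega) (by omega)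
      (by omega) (by omega) (by omega) u]
    constructor
    · rintro ⟨S, hS, A, hA, T, hT, B, hB, c1, c2, c3, hsat⟩
      have hdec : DecSem E (u 0) A B := ⟨S, T, hS, hA, hT, hB, c1, c2, c3⟩
      obtain ⟨rfl, rfl⟩ := hgp.2 A B hdec
      exact (hchain S A T B).1 hsat
    · intro hsat
      obtain ⟨S, T, hS, hA, hT, hB, c1, c2, c3⟩ := hgp.1
      exact ⟨S, hS, x, hA, T, hT, v, hB, c1, c2, c3, (hchain S x T v).2 hsat⟩

end FOSet

namespace FOSet

lemma main_transform : ∀ n : ℕ,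
    (∀ φ, IsSigma n φ → ∃ ψ, TransGood (IsSigma n) φ ψ) ∧
    (∀ φ, IsPi n φ → ∃ ψ, TransGood (IsPi n) φ ψ) := by
  intro n
  induction n with
  | zero =>
      constructor <;>
        · intro φ hφ
          obtain ⟨ψ, _, h⟩ := base_transform φ hφ
          exact ⟨ψ, h⟩
  | succ n ih =>
      constructor
      · rintro φ ⟨i, θ, hθ, rfl⟩
        set F : Finset ℕ := θ.vars ∪ {0, 1, 2, i} with hF
        set N : ℕ := F.sup id with hNdef
        set i' : ℕ := N + 1 with hi'def
        have hle : ∀ x ∈ θ.vars, x ≤ N := fun x hx =>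
          Finset.le_sup (f := id) (Finset.mem_union_left _ hx)
        have hiN : i ≤ N := Finset.le_sup (f := id) (by simp [hF])
        have h2N : 2 ≤ N := Finset.le_sup (f := id) (by simp [hF])
        have hi'θ : i' ∉ θ.vars := fun h => by have := hle _ h; omega
        have hθs : IsPi n (θ.subst i i') := (isSigma_isPi_subst n).2 θ hθ i i' hi'θ
        obtain ⟨ψθ, hψθΓ, hψθfv, hψθsem⟩ := ih.2 (θ.subst i i') hθs
        refine ⟨Fml.ex i' ψθ, ⟨i', ψθ, hψθΓ, rfl⟩, ?_, ?_⟩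
        · intro x hx
          have hx' : x ∈ ψθ.fv ∧ x ≠ i' := by simpa [Fml.fv] using hx
          rcases hψθfv x hx'.1 with ⟨h1, h2⟩ | h1
          · rcases Fml.mem_fv_subst θ i i' hi'θ x h1 with ⟨h3, h4⟩ | h3
            · exact Or.inl ⟨by simp [Fml.fv]; exact ⟨h3, h4⟩, h2⟩
            · exact absurd h3 hx'.2
          · exact Or.inr h1
        · intro M E x v u hgp
          simp only [Sat, SatIn, Set.mem_univ, true_and]
          refine exists_congr fun c => ?_
          have hgp' : GoodPair E ((Function.update u i' c) 0) x v := by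
            rwa [Function.update_of_ne (show (0 : ℕ) ≠ i' by omega)]
          have hsem := hψθsem M E x v (Function.update u i' c) hgp'
          simp only [Sat] at hsem
          rw [hsem, satIn_subst E Set.univ θ i i' hi'θ]
          refine satIn_congr E Set.univ θ _ _ (fun k hk => ?_)
          have hki' : k ≠ i' := fun h => hi'θ (h ▸ Fml.mem_vars_of_mem_fv θ k hk)
          have hval : (Function.update (Function.update (Function.update u i' c) 0 x) 2 v) i'
              = c := by
            rw [Function.update_of_ne (show i' ≠ 2 by omega),
              Function.update_of_ne (show i' ≠ 0 by omega), Function.update_self]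
          rw [hval]
          by_cases hki : k = i
          · subst hki; simp
          · rw [Function.update_of_ne hki, Function.update_of_ne hki]
            by_cases hk2 : k = 2
            · subst hk2; simp
            · rw [Function.update_of_ne hk2, Function.update_of_ne hk2]
              by_cases hk0 : k = 0
              · subst hk0; simp
              · rw [Function.update_of_ne hk0, Function.update_of_ne hk0,
                  Function.update_of_ne hki']
      · rintro φ ⟨i, θ, hθ, rfl⟩
        set F : Finset ℕ := θ.vars ∪ {0, 1, 2, i} with hF
        set N : ℕ := F.sup id with hNdef
        set i' : ℕ := N + 1 with hi'def
        have hle : ∀ x ∈ θ.vars, x ≤ N := fun x hx =>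
          Finset.le_sup (f := id) (Finset.mem_union_left _ hx)
        have hiN : i ≤ N := Finset.le_sup (f := id) (by simp [hF])
        have h2N : 2 ≤ N := Finset.le_sup (f := id) (by simp [hF])
        have hi'θ : i' ∉ θ.vars := fun h => by have := hle _ h; omega
        have hθs : IsSigma n (θ.subst i i') := (isSigma_isPi_subst n).1 θ hθ i i' hi'θ
        obtain ⟨ψθ, hψθΓ, hψθfv, hψθsem⟩ := ih.1 (θ.subst i i') hθs
        refine ⟨Fml.all i' ψθ, ⟨i', ψθ, hψθΓ, rfl⟩, ?_, ?_⟩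
        · intro x hx
          have hx' : x ∈ ψθ.fv ∧ x ≠ i' := by simpa [Fml.fv] using hx
          rcases hψθfv x hx'.1 with ⟨h1, h2⟩ | h1
          · rcases Fml.mem_fv_subst θ i i' hi'θ x h1 with ⟨h3, h4⟩ | h3
            · exact Or.inl ⟨by simp [Fml.fv]; exact ⟨h3, h4⟩, h2⟩
            · exact absurd h3 hx'.2
          · exact Or.inr h1
        · intro M E x v u hgp
          simp only [Sat, SatIn, Set.mem_univ, true_implies]
          refine forall_congr' fun c => ?_
          have hgp' : GoodPair E ((Function.update u i' c) 0) x v := by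
            rwa [Function.update_of_ne (show (0 : ℕ) ≠ i' by omega)]
          have hsem := hψθsem M E x v (Function.update u i' c) hgp'
          simp only [Sat] at hsem
          rw [hsem, satIn_subst E Set.univ θ i i' hi'θ]
          refine satIn_congr E Set.univ θ _ _ (fun k hk => ?_)
          have hki' : k ≠ i' := fun h => hi'θ (h ▸ Fml.mem_vars_of_mem_fv θ k hk)
          have hval : (Function.update (Function.update (Function.update u i' c) 0 x) 2 v) i'
              = c := by
            rw [Function.update_of_ne (show i' ≠ 2 by omega),
              Function.update_of_ne (show i' ≠ 0 by omega), Function.update_self]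
          rw [hval]
          by_cases hki : k = i
          · subst hki; simp
          · rw [Function.update_of_ne hki, Function.update_of_ne hki]
            by_cases hk2 : k = 2
            · subst hk2; simp
            · rw [Function.update_of_ne hk2, Function.update_of_ne hk2]
              by_cases hk0 : k = 0
              · subst hk0; simp
              · rw [Function.update_of_ne hk0, Function.update_of_ne hk0,
                  Function.update_of_ne hki']

end FOSet

namespace FOSet

lemma goodPair_of_isOPair {M : Type} {E : M → M → Prop} {z x v : M}
    (h : IsOPairOf E z x v) : GoodPair E z x v := by
  obtain ⟨s, t, hs, ht, hz⟩ := h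
  constructor
  · refine ⟨s, t, (hz s).2 (Or.inl rfl), (hs x).2 (Or.inl rfl),
      (hz t).2 (Or.inr rfl), (ht v).2 (Or.inr rfl), ?_, ?_, ?_⟩
    · intro y hy; rcases (hs y).1 hy with h | h <;> exact h
    · intro y hy; exact (ht y).1 hy
    · intro y hy; exact (hz y).1 hy
  · rintro A B ⟨S, T, hSz, hAS, hTz, hBT, c1, c2, c3⟩
    have hxs : E x s := (hs x).2 (Or.inl rfl)
    have hxt : E x t := (ht x).2 (Or.inl rfl)
    have hvt : E v t := (ht v).2 (Or.inr rfl)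
    have hS : S = s ∨ S = t := (hz S).1 hSz
    have hT : T = s ∨ T = t := (hz T).1 hTz
    have hA : A = x := by
      rcases hS with hS | hS
      · rcases (hs A).1 (by rwa [hS] at hAS) with h | h <;> exact h
      · exact (c1 x (by rwa [← hS] at hxt)).symm
    have hvx_of_St : S = t → v = x := fun hSt =>
      (c1 v (by rwa [← hSt] at hvt)).trans hA
    refine ⟨hA, ?_⟩
    rcases hT with hT | hT
    · -- T = s : need v = x
      have hBx : B = x := by
        rcases (hs B).1 (by rwa [hT] at hBT) with h | h <;> exact h
      have hvx : v = x := by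
        rcases hS with hS | hS
        · rcases c3 t ((hz t).2 (Or.inr rfl)) with h | h
          · have hts : t = s := h.trans hS
            rcases (hs v).1 (by rwa [hts] at hvt) with h' | h' <;> exact h'
          · have hts : t = s := h.trans hT
            rcases (hs v).1 (by rwa [hts] at hvt) with h' | h' <;> exact h'
        · exact hvx_of_St hS
      rw [hBx, hvx]
    · -- T = t
      rcases c2 v (by rwa [← hT] at hvt) with h | h
      · have hvx : v = x := h.trans hA
        rcases (ht B).1 (by rwa [hT] at hBT) with h' | h'
        · exact h'.trans hvx.symm
        · exact h'
      · exact h.symm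

end FOSet

namespace FOSet

/-- Over DB₀, the parameter-free schema Coll_s⁻(Σ_n) is
deductively equivalent to Coll_s(Σ_n). -/
theorem collSMinus_iff_collS (n : ℕ) (M : Type) (E : M → M → Prop)
    (hM : SatDB0 E) :
    CollSMinusScheme E (IsSigma n) ↔ CollSScheme E (IsSigma n) := by
  obtain ⟨hext, ⟨e, he⟩, hpair, hun, hprod, hsep⟩ := hM
  constructor
  · intro h φ hφ hfv v p
    obtain ⟨ψ, hψΓ, hψfv, hψsem⟩ := (main_transform n).1 φ hφ
    have hψfv' : ψ.fv ⊆ ({0, 1} : Set ℕ) := by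
      intro x hx
      rcases hψfv x hx with ⟨h1, h2⟩ | h1
      · have h3 := hfv h1
        simp only [Set.mem_insert_iff, Set.mem_singleton_iff] at h3 ⊢
        tauto
      · simp [h1]
    obtain ⟨sv, hsv⟩ := hpair v v
    obtain ⟨c, hc⟩ := hprod p sv
    obtain ⟨q, hq⟩ := h ψ hψΓ hψfv' c
    refine ⟨q, fun x hxp => ?_⟩
    obtain ⟨s1, hs1⟩ := hpair x x
    obtain ⟨t1, ht1⟩ := hpair x v
    obtain ⟨z, hz⟩ := hpair s1 t1
    have hop : IsOPairOf E z x v := ⟨s1, t1, hs1, ht1, hz⟩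
    have hzc : E z c := (hc z).2 ⟨x, v, hxp, (hsv v).2 (Or.inl rfl), hop⟩
    have hgp : GoodPair E z x v := goodPair_of_isOPair hop
    have key : ∀ y, Sat E (val2 z y) ψ ↔ Sat E (val3 x y v) φ := by
      intro y
      have h0 : (val2 z y) 0 = z := by simp [val2]
      have heq := hψsem M E x v (val2 z y) (by rw [h0]; exact hgp)
      rw [heq]
      refine satIn_congr E Set.univ φ _ _ (fun k hk => ?_)
      have hk' := hfv hk
      simp only [Set.mem_insert_iff, Set.mem_singleton_iff] at hk'
      rcases hk' with rfl | rfl | rfl <;>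
        simp [Function.update_apply, val2, val3]
    have hmain := hq z hzc
    constructor
    · rintro ⟨y, hy⟩
      obtain ⟨y', hy'q, hy'⟩ := hmain.1 ⟨y, (key y).2 hy⟩
      exact ⟨y', hy'q, (key y').1 hy'⟩
    · rintro ⟨y, _, hy⟩
      exact ⟨y, hy⟩
  · intro h φ hφ hfv p
    have hfv' : φ.fv ⊆ ({0, 1, 2} : Set ℕ) := by
      intro x hx
      have := hfv hx
      simp only [Set.mem_insert_iff, Set.mem_singleton_iff] at this ⊢
      tauto
    obtain ⟨q, hq⟩ := h φ hφ hfv' e p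
    refine ⟨q, fun x hx => ?_⟩
    have key : ∀ y, Sat E (val3 x y e) φ ↔ Sat E (val2 x y) φ := by
      intro y
      refine satIn_congr E Set.univ φ _ _ (fun k hk => ?_)
      have hk' := hfv hk
      simp only [Set.mem_insert_iff, Set.mem_singleton_iff] at hk'
      rcases hk' with rfl | rfl <;> simp [val2, val3]
    have hmain := hq x hx
    constructor
    · rintro ⟨y, hy⟩
      obtain ⟨y', hy'q, hy'⟩ := hmain.1 ⟨y, (key y).2 hy⟩
      exact ⟨y', hy'q, (key y').1 hy'⟩
    · rintro ⟨y, _, hy⟩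
      exact ⟨y, hy⟩

end FOSet
end

section
/- Every model of DB₀ has a proper end extension that is again a model of DB₀; that is, for every L_∈-structure M ⊨ DB₀ there is an L_∈-structure N ⊨ DB₀ with M a proper substructure of N such that for all m ∈ M and a ∈ N, if N ⊨ a ∈ m then a ∈ M. -/
namespace FOSet

/-!
Adjoin to `M`, treated as a collection of urelements, all well-founded sets built over it that
have at most `κ = #(ℕ ⊕ M)` elements: formally, well-founded trees over `M` up to bisimilarity,
where old elements are compared by identity. An old set still has only old members, so the
extension is an end extension, and it is proper because the collection of all old elements
becomes a set, while Russell's argument with Δ₀-separation shows that `M` has no universal set.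
Since the sets of the extension are exactly the collections of size at most the infinite
cardinal `κ`, it satisfies pairing, union, product and even full separation.
-/

open Cardinal

def Extensional {N : Type} (E : N → N → Prop) : Prop :=
  ∀ a b : N, (∀ x, E x a ↔ E x b) → a = b

section Abstract

variable {N : Type} {E : N → N → Prop}

theorem SatDB0.exists_not_mem (h : SatDB0 E) (m : N) : ∃ x, ¬ E x m := by
  have hfv : (Fml.not (Fml.mem 0 0)).fv ⊆ {0, 1} := by
    simp [Fml.fv]
  obtain ⟨q, hq⟩ := h.2.2.2.2.2 _ (.not (.mem 0 0)) hfv m m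
  refine ⟨q, fun hqm => ?_⟩
  have hqq := hq q
  simp only [Sat, SatIn, val2, if_true] at hqq
  tauto

theorem isPairOf_unique (hext : Extensional E) {p p' a b : N}
    (h : IsPairOf E p a b) (h' : IsPairOf E p' a b) : p = p' :=
  hext _ _ fun x => (h x).trans (h' x).symm

theorem isOPairOf_unique (hext : Extensional E) {z z' a b : N}
    (h : IsOPairOf E z a b) (h' : IsOPairOf E z' a b) : z = z' := by
  obtain ⟨s, t, hs, ht, hz⟩ := h
  obtain ⟨s', t', hs', ht', hz'⟩ := h'
  obtain rfl := isPairOf_unique hext hs hs'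
  obtain rfl := isPairOf_unique hext ht ht'
  exact isPairOf_unique hext hz hz'

theorem satDB0_of_forall_mk_le {κ : Cardinal} (hκ : ℵ₀ ≤ κ)
    (hext : Extensional E)
    (hsmall : ∀ a, #{x | E x a} ≤ κ)
    (hrealize : ∀ S : Set N, #S ≤ κ → ∃ a, ∀ x, E x a ↔ x ∈ S) :
    SatDB0 E := by
  have hfinite (S : Set N) (hS : S.Finite) : ∃ a, ∀ x, E x a ↔ x ∈ S :=
    hrealize S ((lt_aleph0_iff_set_finite.2 hS).le.trans hκ)
  have hpair (a b : N) : ∃ p, IsPairOf E p a b := by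
    simpa [IsPairOf] using hfinite {a, b} (by simp)
  have hopair (a b : N) : ∃ z, IsOPairOf E z a b := by
    obtain ⟨s, hs⟩ := hpair a a
    obtain ⟨t, ht⟩ := hpair a b
    obtain ⟨z, hz⟩ := hpair s t
    exact ⟨z, s, t, hs, ht, hz⟩
  choose opair hopair using hopair
  refine ⟨hext, ?_, hpair, fun a => ?_, fun a b => ?_, fun φ _ _ v p => ?_⟩
  · simpa using hfinite ∅ Set.finite_empty
  · refine (hrealize (⋃ y ∈ {y | E y a}, {x | E x y}) ?_).imp fun u hu x => by simp [hu]
    calc #(⋃ y ∈ {y | E y a}, {x | E x y})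
        ≤ #{y | E y a} * ⨆ y : {y | E y a}, #{x | E x y.1} := mk_biUnion_le _ _
      _ ≤ κ * κ := mul_le_mul' (hsmall a) (ciSup_le' fun y => hsmall y.1)
      _ = κ := mul_eq_self hκ
  · have hprod : #(Set.image2 opair {x | E x a} {y | E y b}) ≤ κ :=
      mk_image2_le.trans ((mul_le_mul' (hsmall a) (hsmall b)).trans (mul_eq_self hκ).le)
    refine (hrealize _ hprod).imp fun c hc z => ?_
    rw [hc]
    constructor
    · rintro ⟨x, hx, y, hy, rfl⟩
      exact ⟨x, y, hx, hy, hopair x y⟩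
    · rintro ⟨x, y, hx, hy, hz⟩
      exact ⟨x, hx, y, hy, isOPairOf_unique hext (hopair x y) hz⟩
  · exact (hrealize {x | E x p ∧ Sat E (val2 x v) φ}
      ((mk_le_mk_of_subset fun x hx => hx.1).trans (hsmall p))).imp fun q hq => hq

end Abstract

/-- `old m` stands for the element `m` of `M` and `mk s g` for the new set `{g i | i ∈ s}`. -/
inductive PreSet (M I : Type) : Type
  | old : M → PreSet M I
  | mk (s : Set I) : (s → PreSet M I) → PreSet M I

namespace PreSet

variable {M I : Type} (EM : M → M → Prop)

def members : PreSet M I → Set (PreSet M I)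
  | old m => old '' {y | EM y m}
  | mk _ g => Set.range g

/-- Old elements are compared by identity rather than through their members, since `M` need not
be well-founded; this is what makes `M` a substructure of the quotient. -/
def IsBisim (R : PreSet M I → PreSet M I → Prop) : Prop :=
  ∀ ⦃a b⦄, R a b → (∀ x y, a = old x → b = old y → x = y) ∧
    (∀ x ∈ members EM a, ∃ y ∈ members EM b, R x y) ∧
    (∀ y ∈ members EM b, ∃ x ∈ members EM a, R x y)

def Bisimilar (a b : PreSet M I) : Prop := ∃ R, IsBisim EM R ∧ R a b

theorem isBisim_eq : IsBisim EM (@Eq (PreSet M I)) := by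
  rintro a _ rfl
  refine ⟨?_, fun x hx => ⟨x, hx, rfl⟩, fun y hy => ⟨y, hy, rfl⟩⟩
  rintro x y rfl h
  exact old.inj h

variable {EM}

theorem IsBisim.flip {R : PreSet M I → PreSet M I → Prop} (hR : IsBisim EM R) :
    IsBisim EM (flip R) := fun _ _ h =>
  ⟨fun x y ha hb => ((hR h).1 y x hb ha).symm, (hR h).2.2, (hR h).2.1⟩

/-- Well-foundedness of the middle pre-set is what lets extensionality of `M` propagate. -/
theorem IsBisim.old_eq_of_comp (hext : Extensional EM)
    {R S : PreSet M I → PreSet M I → Prop} (hR : IsBisim EM R) (hS : IsBisim EM S) :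
    ∀ (b : PreSet M I) {x z : M}, R (old x) b → S b (old z) → x = z
  | old y, x, z, hxy, hyz => ((hR hxy).1 x y rfl rfl).trans ((hS hyz).1 y z rfl rfl)
  | mk s g, x, z, hxb, hbz => by
    apply hext
    intro u
    constructor
    · intro hu
      obtain ⟨_, ⟨i, rfl⟩, hui⟩ := (hR hxb).2.1 (old u) ⟨u, hu, rfl⟩
      obtain ⟨_, ⟨w, hw, rfl⟩, hiw⟩ := (hS hbz).2.1 (g i) ⟨i, rfl⟩
      rwa [hR.old_eq_of_comp hext hS (g i) hui hiw]
    · intro hu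
      obtain ⟨_, ⟨i, rfl⟩, hiu⟩ := (hS hbz).2.2 (old u) ⟨u, hu, rfl⟩
      obtain ⟨_, ⟨w, hw, rfl⟩, hwi⟩ := (hR hxb).2.2 (g i) ⟨i, rfl⟩
      rwa [← hR.old_eq_of_comp hext hS (g i) hwi hiu]

theorem IsBisim.comp (hext : Extensional EM)
    {R S : PreSet M I → PreSet M I → Prop} (hR : IsBisim EM R) (hS : IsBisim EM S) :
    IsBisim EM (Relation.Comp R S) := by
  rintro a c ⟨b, hab, hbc⟩
  refine ⟨?_, fun x hx => ?_, fun z hz => ?_⟩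
  · rintro x z rfl rfl
    exact hR.old_eq_of_comp hext hS b hab hbc
  · obtain ⟨y, hy, hxy⟩ := (hR hab).2.1 x hx
    obtain ⟨z, hz, hyz⟩ := (hS hbc).2.1 y hy
    exact ⟨z, hz, y, hxy, hyz⟩
  · obtain ⟨y, hy, hyz⟩ := (hS hbc).2.2 z hz
    obtain ⟨x, hx, hxy⟩ := (hR hab).2.2 y hy
    exact ⟨x, hx, y, hxy, hyz⟩

theorem isBisim_bisimilar : IsBisim EM (Bisimilar (I := I) EM) := by
  rintro a b ⟨R, hR, hab⟩
  obtain ⟨hold, hab, hba⟩ := hR hab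
  exact ⟨hold, fun x hx => (hab x hx).imp fun _ ⟨hy, hxy⟩ => ⟨hy, R, hR, hxy⟩,
    fun y hy => (hba y hy).imp fun _ ⟨hx, hxy⟩ => ⟨hx, R, hR, hxy⟩⟩

variable (I) in
def bisimSetoid (hext : Extensional EM) : Setoid (PreSet M I) where
  r := Bisimilar EM
  iseqv :=
    ⟨fun _ => ⟨Eq, isBisim_eq EM, rfl⟩, fun ⟨R, hR, h⟩ => ⟨flip R, hR.flip, h⟩,
      fun ⟨_, hR, h⟩ ⟨_, hS, h'⟩ => ⟨_, hR.comp hext hS, _, h, h'⟩⟩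

theorem mk_members_le (hM : #M ≤ #I) : ∀ a : PreSet M I, #(members EM a) ≤ #I
  | old _ => mk_image_le.trans ((mk_set_le _).trans hM)
  | mk s _ => mk_range_le.trans (mk_set_le s)

end PreSet

open PreSet

def EndExt {M : Type} (EM : M → M → Prop) (I : Type) (hext : Extensional EM) : Type :=
  Quotient (bisimSetoid I hext)

namespace EndExt

variable {M I : Type} {EM : M → M → Prop} {hext : Extensional EM}

def mk (a : PreSet M I) : EndExt EM I hext := Quotient.mk _ a

theorem mk_eq_mk {a b : PreSet M I} : (mk a : EndExt EM I hext) = mk b ↔ Bisimilar EM a b :=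
  Quotient.eq

theorem image_mk_members_eq {a b : PreSet M I} (h : Bisimilar EM a b) :
    (mk '' members EM a : Set (EndExt EM I hext)) = mk '' members EM b := by
  obtain ⟨-, hab, hba⟩ := isBisim_bisimilar h
  ext z
  constructor
  · rintro ⟨x, hx, rfl⟩
    obtain ⟨y, hy, hxy⟩ := hab x hx
    exact ⟨y, hy, (mk_eq_mk.2 hxy).symm⟩
  · rintro ⟨y, hy, rfl⟩
    obtain ⟨x, hx, hxy⟩ := hba y hy
    exact ⟨x, hx, mk_eq_mk.2 hxy⟩

def extension : EndExt EM I hext → Set (EndExt EM I hext) :=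
  Quotient.lift (fun a => mk '' members EM a) fun _ _ => image_mk_members_eq

def Mem (x a : EndExt EM I hext) : Prop := x ∈ extension a

theorem mem_mk_iff {x : EndExt EM I hext} {a : PreSet M I} :
    Mem x (mk a) ↔ ∃ y ∈ members EM a, mk y = x := Iff.rfl

theorem mk_surjective : Function.Surjective (mk : PreSet M I → EndExt EM I hext) :=
  Quotient.mk_surjective

def embed (m : M) : EndExt EM I hext := mk (old m)

theorem embed_injective : Function.Injective (embed : M → EndExt EM I hext) := by
  intro a b h
  obtain ⟨R, hR, hab⟩ := mk_eq_mk.1 h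
  exact (hR hab).1 a b rfl rfl

theorem mem_embed_iff {x : EndExt EM I hext} {m : M} :
    Mem x (embed m) ↔ ∃ y, EM y m ∧ embed y = x := by
  simp only [embed, mem_mk_iff, members, Set.exists_mem_image, Set.mem_ofPred_eq]

theorem embed_mem_embed_iff {a b : M} : Mem (embed a : EndExt EM I hext) (embed b) ↔ EM a b := by
  simp only [mem_embed_iff, embed_injective.eq_iff, exists_eq_right]

theorem subStr_embed : SubStr EM Mem (embed : M → EndExt EM I hext) :=
  ⟨embed_injective, fun _ _ => embed_mem_embed_iff.symm⟩

theorem isEndEmb_embed : IsEndEmb Mem (embed : M → EndExt EM I hext) := fun _ _ h =>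
  (mem_embed_iff.1 h).imp fun _ => And.right

theorem extensional_mem : Extensional (Mem : EndExt EM I hext → EndExt EM I hext → Prop) := by
  unfold Extensional
  refine Quotient.ind₂ fun a b hab => mk_eq_mk.2 ⟨fun u v => Bisimilar EM u v ∨ u = a ∧ v = b, ?_,
    .inr ⟨rfl, rfl⟩⟩
  rintro u v (huv | ⟨rfl, rfl⟩)
  · obtain ⟨hold, huv, hvu⟩ := isBisim_bisimilar huv
    exact ⟨hold, fun x hx => (huv x hx).imp fun _ ⟨hy, h⟩ => ⟨hy, .inl h⟩,
      fun y hy => (hvu y hy).imp fun _ ⟨hx, h⟩ => ⟨hx, .inl h⟩⟩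
  refine ⟨?_, fun x hx => ?_, fun y hy => ?_⟩
  · rintro x y rfl rfl
    exact hext x y fun z =>
      embed_mem_embed_iff.symm.trans ((hab (embed z)).trans embed_mem_embed_iff)
  · obtain ⟨y, hy, hyx⟩ := (hab (mk x)).1 ⟨x, hx, rfl⟩
    exact ⟨y, hy, .inl (mk_eq_mk.1 hyx.symm)⟩
  · obtain ⟨x, hx, hxy⟩ := (hab (mk y)).2 ⟨y, hy, rfl⟩
    exact ⟨x, hx, .inl (mk_eq_mk.1 hxy)⟩

theorem mk_extension_le (hM : #M ≤ #I) (a : EndExt EM I hext) : #{x | Mem x a} ≤ #I :=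
  Quotient.inductionOn a fun a => mk_image_le.trans (mk_members_le hM a)

theorem exists_extension_eq (S : Set (EndExt EM I hext)) (hS : #S ≤ #I) :
    ∃ a, ∀ x, Mem x a ↔ x ∈ S := by
  obtain ⟨e⟩ := (le_def S I).1 hS
  let σ := Equiv.ofInjective e e.injective
  choose rep hrep using (mk_surjective : Function.Surjective (mk : PreSet M I → EndExt EM I hext))
  refine ⟨mk (.mk (Set.range e) fun i => rep (σ.symm i)), fun x => ?_⟩
  have hrange : (mk '' Set.range fun i => rep (σ.symm i)) = S := by
    rw [← Set.range_comp, Function.comp_def]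
    simp only [hrep]
    rw [← Function.comp_def Subtype.val, EquivLike.range_comp, Subtype.range_coe]
  exact Set.ext_iff.1 hrange x

theorem satDB0 (hI : ℵ₀ ≤ #I) (hM : #M ≤ #I) :
    SatDB0 (Mem : EndExt EM I hext → EndExt EM I hext → Prop) :=
  satDB0_of_forall_mk_le hI extensional_mem (mk_extension_le hM) exists_extension_eq

/-- The collection of all old elements is a new set. -/
theorem embed_not_surjective (hM : #M ≤ #I) (hnot : ∀ m, ∃ x, ¬ EM x m) :
    ¬ Function.Surjective (embed : M → EndExt EM I hext) := by
  obtain ⟨u, hu⟩ := exists_extension_eq (Set.range (embed : M → EndExt EM I hext))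
    (mk_range_le.trans hM)
  rintro hsurj
  obtain ⟨m, rfl⟩ := hsurj u
  obtain ⟨x, hx⟩ := hnot m
  exact hx (embed_mem_embed_iff.1 ((hu _).2 ⟨x, rfl⟩))

end EndExt

/-- Every model of DB₀ has a proper end extension that is again
a model of DB₀. -/
theorem exists_proper_end_extension (M : Type) (EM : M → M → Prop)
    (hM : SatDB0 EM) :
    ∃ (N : Type) (EN : N → N → Prop) (f : M → N),
      SatDB0 EN ∧ SubStr EM EN f ∧ ¬ Function.Surjective f ∧ IsEndEmb EN f := by
  have hI : ℵ₀ ≤ #(ℕ ⊕ M) := aleph0_le_mk _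
  have hM_le : #M ≤ #(ℕ ⊕ M) := mk_le_of_injective Sum.inr_injective
  exact ⟨EndExt EM (ℕ ⊕ M) hM.1, EndExt.Mem, EndExt.embed, EndExt.satDB0 hI hM_le,
    EndExt.subStr_embed, EndExt.embed_not_surjective hM_le hM.exists_not_mem,
    EndExt.isEndEmb_embed⟩

end FOSet
end
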